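/- arXiv:2302.11637 — 5 statements merged into one kernel-verified Lean document; each statement's English description precedes it below -/
import Mathlib

section
/- Let S₁, S₂, P be subsets of a finite weighted ground set with ε ≤ μ(S₁), μ(S₂), μ(P) ≤ 2ε. Suppose μ(P ∩ Sᵢ) > (μ(P) + μ(Sᵢ) − βε)/2 for i = 1,2, and μ(S₁ ∩ S₂) < γ·μ(S₁) with γ ≤ 1/4. Then μ(Δ(S₁ ∩ P, S₂ ∩ P)) > (3/2 − β − γ)·μ(P). -/
open Finset

theorem second_level_packing_heavy {α : Type*} [DecidableEq α]
    (μ : α → ℝ) (hμ : ∀ x, 0 ≤ μ x) (S₁ S₂ P : Finset α) (β γ ε : ℝ)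
    (hβ : 0 < β) (hγ : 0 < γ) (hγ4 : γ ≤ 1/4) (hε : 0 < ε)
    (h1l : ε ≤ ∑ x ∈ S₁, μ x) (h1u : ∑ x ∈ S₁, μ x ≤ 2 * ε)
    (h2l : ε ≤ ∑ x ∈ S₂, μ x) (h2u : ∑ x ∈ S₂, μ x ≤ 2 * ε)
    (hPl : ε ≤ ∑ x ∈ P, μ x) (hPu : ∑ x ∈ P, μ x ≤ 2 * ε)
    (hint1 : ((∑ x ∈ P, μ x) + (∑ x ∈ S₁, μ x) - β * ε) / 2 < ∑ x ∈ P ∩ S₁, μ x)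
    (hint2 : ((∑ x ∈ P, μ x) + (∑ x ∈ S₂, μ x) - β * ε) / 2 < ∑ x ∈ P ∩ S₂, μ x)
    (hsmall : ∑ x ∈ S₁ ∩ S₂, μ x < γ * ∑ x ∈ S₁, μ x) :
    (3/2 - β - γ) * ∑ x ∈ P, μ x
      < ∑ x ∈ ((S₁ ∩ P) \ (S₂ ∩ P)) ∪ ((S₂ ∩ P) \ (S₁ ∩ P)), μ x := by
  set A := S₁ ∩ P with hA
  set B := S₂ ∩ P with hB
  have hdisj : Disjoint (A \ B) (B \ A) := disjoint_sdiff_sdiff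
  have hsum : ∑ x ∈ (A \ B) ∪ (B \ A), μ x
      = (∑ x ∈ A, μ x - ∑ x ∈ A ∩ B, μ x) + (∑ x ∈ B, μ x - ∑ x ∈ A ∩ B, μ x) := by
    rw [Finset.sum_union hdisj]
    have h1 : ∑ x ∈ A \ B, μ x = ∑ x ∈ A, μ x - ∑ x ∈ A ∩ B, μ x := by
      have := Finset.sum_sdiff (f := μ) (inter_subset_left (s₁ := A) (s₂ := B))
      have heq : A \ (A ∩ B) = A \ B := by
        ext x; simp [Finset.mem_sdiff, Finset.mem_inter]
      linarith [this, heq ▸ this]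
    have h2 : ∑ x ∈ B \ A, μ x = ∑ x ∈ B, μ x - ∑ x ∈ A ∩ B, μ x := by
      have := Finset.sum_sdiff (f := μ) (inter_subset_right (s₁ := A) (s₂ := B))
      have heq : B \ (A ∩ B) = B \ A := by
        ext x; simp [Finset.mem_sdiff, Finset.mem_inter]
      rw [← heq]
      linarith [this]
    rw [h1, h2]
  have hAeq : ∑ x ∈ A, μ x = ∑ x ∈ P ∩ S₁, μ x := by rw [hA, Finset.inter_comm]
  have hBeq : ∑ x ∈ B, μ x = ∑ x ∈ P ∩ S₂, μ x := by rw [hB, Finset.inter_comm]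
  have hsub : A ∩ B ⊆ S₁ ∩ S₂ := by
    intro x hx
    simp only [hA, hB, Finset.mem_inter] at hx ⊢
    tauto
  have ht : ∑ x ∈ A ∩ B, μ x ≤ ∑ x ∈ S₁ ∩ S₂, μ x :=
    Finset.sum_le_sum_of_subset_of_nonneg hsub (fun x _ _ => hμ x)
  rw [hsum, hAeq, hBeq]
  nlinarith [mul_nonneg hβ.le (sub_nonneg.2 hPl),
    mul_nonneg (by linarith : (0:ℝ) ≤ 1/2 - 2*γ) (sub_nonneg.2 h1l),
    mul_nonneg (by linarith : (0:ℝ) ≤ 1/2 - γ) (by linarith : (0:ℝ) ≤ 2*ε - ∑ x ∈ P, μ x),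
    mul_pos hγ (lt_of_lt_of_le hε hPl)]
end

section
/- Weighted Shallow Packing Lemma: Let (X, 𝒫) be a finite set system with VC-dimension at most d and shallow cell complexity φ(·,·), equipped with a probability weight μ on X. If 𝒫 is a weighted (k,δ)-packing with respect to μ (i.e., μ(S) ≤ k for all S ∈ 𝒫, and μ(Δ(S,R)) ≥ δ for all distinct S,R ∈ 𝒫), then |𝒫| ≤ (24d/δ) · φ(8d/δ, 48dk/δ). -/
open Finset
open scoped Classical

lemma WSP.sum_le_sum_inj {A B : Type*} [DecidableEq B] (s : Finset A) (t : Finset B)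
    (f : A → ℝ) (g : B → ℝ) (ι : A → B)
    (hg : ∀ b ∈ t, 0 ≤ g b)
    (hmem : ∀ a ∈ s, f a ≠ 0 → ι a ∈ t)
    (hval : ∀ a ∈ s, f a ≠ 0 → f a ≤ g (ι a))
    (hinj : ∀ a ∈ s, f a ≠ 0 → ∀ a' ∈ s, f a' ≠ 0 → ι a = ι a' → a = a') :
    ∑ a ∈ s, f a ≤ ∑ b ∈ t, g b := by
  classical
  set s' := s.filter (fun a => f a ≠ 0) with hs'
  have h1 : ∑ a ∈ s, f a = ∑ a ∈ s', f a := (Finset.sum_filter_ne_zero s).symm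
  have h2 : ∑ a ∈ s', f a ≤ ∑ a ∈ s', g (ι a) := by
    apply Finset.sum_le_sum
    intro a ha
    rcases Finset.mem_filter.mp ha with ⟨ha1, ha2⟩
    exact hval a ha1 ha2
  have h3 : ∑ a ∈ s', g (ι a) = ∑ b ∈ s'.image ι, g b := by
    rw [Finset.sum_image]
    intro x hx y hy hxy
    rcases Finset.mem_filter.mp hx with ⟨hx1, hx2⟩
    rcases Finset.mem_filter.mp hy with ⟨hy1, hy2⟩
    exact hinj x hx1 hx2 y hy1 hy2 hxy
  have h4 : ∑ b ∈ s'.image ι, g b ≤ ∑ b ∈ t, g b := by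
    apply Finset.sum_le_sum_of_subset_of_nonneg
    · intro b hb
      rcases Finset.mem_image.mp hb with ⟨a, ha, rfl⟩
      rcases Finset.mem_filter.mp ha with ⟨ha1, ha2⟩
      exact hmem a ha1 ha2
    · intro b hb _; exact hg b hb
  linarith

lemma WSP.four_min (p q r s : ℝ) :
    min p q + min r s ≤ min (max p r) (max q s) + min (min p r) (min q s) := by
  rcases le_total p r with h1 | h1 <;> rcases le_total q s with h2 | h2 <;>
    simp only [min_def, max_def] <;> split_ifs <;> linarith

/-- Weighted unit-distance (Haussler edge) lemma. -/
theorem WSP.ud {β : Type*} [DecidableEq β] (I : Finset β) :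
    ∀ (d : ℕ) (Q : Finset (Finset β)), (∀ q ∈ Q, q ⊆ I) →
    (∀ S ⊆ I, (∀ T ⊆ S, ∃ q ∈ Q, q ∩ S = T) → S.card ≤ d) →
    ∀ (w : Finset β → ℝ), (∀ q, 0 ≤ w q) →
    (∑ p ∈ Q ×ˢ Q, if p.1 ⊆ p.2 ∧ (p.2 \ p.1).card = 1 then min (w p.1) (w p.2) else 0)
      ≤ d * ∑ q ∈ Q, w q := by
  classical
  induction I using Finset.induction_on with
  | empty =>
    intro d Q hQ _ w hw
    have hz : (∑ p ∈ Q ×ˢ Q, if p.1 ⊆ p.2 ∧ (p.2 \ p.1).card = 1 then min (w p.1) (w p.2) else 0) = 0 := by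
      apply Finset.sum_eq_zero
      intro p hp
      rcases Finset.mem_product.mp hp with ⟨h1, h2⟩
      have e1 : p.1 = ∅ := Finset.subset_empty.mp (hQ _ h1)
      have e2 : p.2 = ∅ := Finset.subset_empty.mp (hQ _ h2)
      rw [if_neg]
      rw [e1, e2]
      simp
    rw [hz]
    exact mul_nonneg (Nat.cast_nonneg d) (Finset.sum_nonneg fun q _ => hw q)
  | @insert i I' hi IH =>
    intro d Q hQ hVC w hw
    set Q0 := Q.filter (fun q => i ∉ q) with hQ0def
    set Q1 := Q.filter (fun q => i ∈ q) with hQ1def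
    set Q1' := Q1.image (fun q => q.erase i) with hQ1'def
    set Qp := Q0 ∪ Q1' with hQpdef
    set D := Q0 ∩ Q1' with hDdef
    set a : Finset β → ℝ := fun u => if u ∈ Q0 then w u else 0 with hadef
    set b : Finset β → ℝ := fun u => if insert i u ∈ Q1 then w (insert i u) else 0 with hbdef
    set wt : Finset β → ℝ := fun u => max (a u) (b u) with hwtdef
    set wh : Finset β → ℝ := fun u => min (a u) (b u) with hwhdef
    have ha0 : ∀ u, 0 ≤ a u := by intro u; simp only [hadef]; split_ifs; exacts [hw u, le_refl 0]
    have hb0 : ∀ u, 0 ≤ b u := by intro u; simp only [hbdef]; split_ifs; exacts [hw _, le_refl 0]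
    have hwt0 : ∀ u, 0 ≤ wt u := fun u => le_trans (ha0 u) (le_max_left _ _)
    have hwh0 : ∀ u, 0 ≤ wh u := fun u => le_min (ha0 u) (hb0 u)
    -- membership facts
    have hQ1'i : ∀ u ∈ Q1', i ∉ u ∧ insert i u ∈ Q1 := by
      intro u hu
      rcases Finset.mem_image.mp hu with ⟨q, hq, rfl⟩
      have hiq : i ∈ q := (Finset.mem_filter.mp hq).2
      refine ⟨Finset.notMem_erase _ _, ?_⟩
      rw [Finset.insert_erase hiq]; exact hq
    have hQ1'of : ∀ u, i ∉ u → insert i u ∈ Q1 → u ∈ Q1' := by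
      intro u hiu h
      have : (insert i u).erase i = u := Finset.erase_insert hiu
      rw [hQ1'def]
      exact this ▸ Finset.mem_image_of_mem _ h
    have hnotiQp : ∀ u ∈ Qp, i ∉ u := by
      intro u hu
      rcases Finset.mem_union.mp hu with h | h
      · exact (Finset.mem_filter.mp h).2
      · exact (hQ1'i u h).1
    have hwh_zero : ∀ u ∈ Qp, u ∉ D → wh u = 0 := by
      intro u hu hnd
      rw [hDdef, Finset.mem_inter] at hnd
      push_neg at hnd
      by_cases h0 : u ∈ Q0
      · have h1 : u ∉ Q1' := hnd h0
        have hb : b u = 0 := by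
          simp only [hbdef]
          rw [if_neg]
          intro hc
          exact h1 (hQ1'of u (hnotiQp u hu) hc)
        simp only [hwhdef, hb]
        exact min_eq_right (ha0 u)
      · have ha : a u = 0 := by simp only [hadef]; rw [if_neg h0]
        simp only [hwhdef, ha]
        exact min_eq_left (hb0 u)
    have hQpsub : ∀ u ∈ Qp, u ⊆ I' := by
      intro u hu
      rcases Finset.mem_union.mp hu with h | h
      · have h1 := hQ _ (Finset.mem_filter.mp h).1
        have h2 := Finset.subset_insert_iff.mp h1
        rwa [Finset.erase_eq_of_notMem (Finset.mem_filter.mp h).2] at h2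
      · rcases Finset.mem_image.mp h with ⟨q, hq, rfl⟩
        exact Finset.subset_insert_iff.mp (hQ _ (Finset.mem_filter.mp hq).1)
    have hVCp : ∀ S ⊆ I', (∀ T ⊆ S, ∃ u ∈ Qp, u ∩ S = T) → S.card ≤ d := by
      intro S hS hsh
      refine hVC S (hS.trans (Finset.subset_insert _ _)) ?_
      intro T hT
      obtain ⟨u, hu, huT⟩ := hsh T hT
      have hiS : i ∉ S := fun hc => hi (hS hc)
      rcases Finset.mem_union.mp hu with h | h
      · exact ⟨u, (Finset.mem_filter.mp h).1, huT⟩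
      · refine ⟨insert i u, (Finset.mem_filter.mp (hQ1'i u h).2).1, ?_⟩
        rw [Finset.insert_inter_of_notMem hiS, huT]
    have hVCD : ∀ S ⊆ I', (∀ T ⊆ S, ∃ u ∈ D, u ∩ S = T) → S.card ≤ d - 1 := by
      intro S hS hsh
      have hiS : i ∉ S := fun hc => hi (hS hc)
      have hcard : (insert i S).card ≤ d := by
        refine hVC (insert i S) (Finset.insert_subset_insert _ hS) ?_
        intro T hT
        have hT0 : T.erase i ⊆ S := Finset.subset_insert_iff.mp hT
        obtain ⟨u, hu, huT⟩ := hsh (T.erase i) hT0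
        have hu0 : u ∈ Q0 := (Finset.mem_inter.mp hu).1
        have hu1 : u ∈ Q1' := (Finset.mem_inter.mp hu).2
        have hiu : i ∉ u := (Finset.mem_filter.mp hu0).2
        by_cases hiT : i ∈ T
        · refine ⟨insert i u, (Finset.mem_filter.mp (hQ1'i u hu1).2).1, ?_⟩
          have : insert i u ∩ insert i S = insert i (u ∩ S) := by
            ext x
            simp only [Finset.mem_inter, Finset.mem_insert]
            tauto
          rw [this, huT, Finset.insert_erase hiT]
        · refine ⟨u, (Finset.mem_filter.mp hu0).1, ?_⟩
          have : u ∩ insert i S = u ∩ S := by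
            ext x
            simp only [Finset.mem_inter, Finset.mem_insert]
            constructor
            · rintro ⟨hx1, hx2 | hx2⟩
              · exact absurd (hx2 ▸ hx1) hiu
              · exact ⟨hx1, hx2⟩
            · rintro ⟨hx1, hx2⟩; exact ⟨hx1, Or.inr hx2⟩
          rw [this, huT, Finset.erase_eq_of_notMem hiT]
      have : S.card + 1 ≤ d := by
        rwa [Finset.card_insert_of_notMem hiS] at hcard
      omega
    have hd1 : D.Nonempty → 1 ≤ d := by
      rintro ⟨u, hu⟩
      have hu0 : u ∈ Q0 := (Finset.mem_inter.mp hu).1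
      have hu1 : u ∈ Q1' := (Finset.mem_inter.mp hu).2
      have hiu : i ∉ u := (Finset.mem_filter.mp hu0).2
      have h := hVC {i} (Finset.singleton_subset_iff.mpr (Finset.mem_insert_self _ _)) ?_
      · simpa using h
      intro T hT
      rcases Finset.subset_singleton_iff.mp hT with rfl | rfl
      · exact ⟨u, (Finset.mem_filter.mp hu0).1, Finset.inter_singleton_of_notMem hiu⟩
      · exact ⟨insert i u, (Finset.mem_filter.mp (hQ1'i u hu1).2).1,
          Finset.inter_singleton_of_mem (Finset.mem_insert_self _ _)⟩
    -- decompose the edge sum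
    classical
    set fA : Finset β × Finset β → ℝ := fun p =>
      if (p.1 ⊆ p.2 ∧ (p.2 \ p.1).card = 1) ∧ i ∈ p.2 \ p.1 then min (w p.1) (w p.2) else 0 with hfAdef
    set fB0 : Finset β × Finset β → ℝ := fun p =>
      if (p.1 ⊆ p.2 ∧ (p.2 \ p.1).card = 1) ∧ i ∉ p.2 \ p.1 ∧ i ∉ p.1 then min (w p.1) (w p.2) else 0 with hfB0def
    set fB1 : Finset β × Finset β → ℝ := fun p =>
      if (p.1 ⊆ p.2 ∧ (p.2 \ p.1).card = 1) ∧ i ∉ p.2 \ p.1 ∧ i ∈ p.1 then min (w p.1) (w p.2) else 0 with hfB1def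
    have hsplit : ∀ p : Finset β × Finset β,
        (if p.1 ⊆ p.2 ∧ (p.2 \ p.1).card = 1 then min (w p.1) (w p.2) else 0)
          = fA p + fB0 p + fB1 p := by
      intro p
      simp only [hfAdef, hfB0def, hfB1def]
      by_cases hc : p.1 ⊆ p.2 ∧ (p.2 \ p.1).card = 1
      · by_cases h1 : i ∈ p.2 \ p.1
        · rw [if_pos hc, if_pos ⟨hc, h1⟩, if_neg (by tauto), if_neg (by tauto)]; ring
        · by_cases h2 : i ∈ p.1
          · rw [if_pos hc, if_neg (by tauto), if_neg (by tauto), if_pos ⟨hc, h1, h2⟩]; ring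
          · rw [if_pos hc, if_neg (by tauto), if_pos ⟨hc, h1, h2⟩, if_neg (by tauto)]; ring
      · rw [if_neg hc, if_neg (by tauto), if_neg (by tauto), if_neg (by tauto)]; ring
    have hfactsA : ∀ p : Finset β × Finset β, p ∈ Q ×ˢ Q → fA p ≠ 0 →
        p.1 ∈ D ∧ p.2 = insert i p.1 ∧ fA p = wh p.1 := by
      intro p hp hne
      have hcnd : (p.1 ⊆ p.2 ∧ (p.2 \ p.1).card = 1) ∧ i ∈ p.2 \ p.1 := by
        by_contra hc
        rw [hfAdef] at hne
        exact hne (if_neg hc)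
      have hip1 : i ∉ p.1 := (Finset.mem_sdiff.mp hcnd.2).2
      have hdiff : p.2 \ p.1 = {i} := by
        rcases Finset.card_eq_one.mp hcnd.1.2 with ⟨x, hx⟩
        have : i ∈ ({x} : Finset β) := hx ▸ hcnd.2
        rw [Finset.mem_singleton] at this
        rw [hx, this]
      have hp2 : p.2 = insert i p.1 := by
        have h := Finset.union_sdiff_of_subset hcnd.1.1
        rw [hdiff] at h
        rw [← h, Finset.insert_eq, Finset.union_comm]
      have hp1Q : p.1 ∈ Q := (Finset.mem_product.mp hp).1
      have hp2Q : p.2 ∈ Q := (Finset.mem_product.mp hp).2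
      have hp1Q0 : p.1 ∈ Q0 := Finset.mem_filter.mpr ⟨hp1Q, hip1⟩
      have hiiQ1 : insert i p.1 ∈ Q1 := by
        rw [← hp2]
        exact Finset.mem_filter.mpr ⟨hp2Q, hp2 ▸ Finset.mem_insert_self _ _⟩
      have hp1D : p.1 ∈ D := Finset.mem_inter.mpr ⟨hp1Q0, hQ1'of _ hip1 hiiQ1⟩
      refine ⟨hp1D, hp2, ?_⟩
      have hval : fA p = min (w p.1) (w p.2) := by rw [hfAdef]; exact if_pos hcnd
      have hav : a p.1 = w p.1 := by simp only [hadef]; rw [if_pos hp1Q0]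
      have hbv : b p.1 = w p.2 := by
        simp only [hbdef]; rw [if_pos hiiQ1, ← hp2]
      rw [hval]
      simp only [hwhdef]
      rw [hav, hbv]
    have hA : ∑ p ∈ Q ×ˢ Q, fA p ≤ ∑ u ∈ D, wh u := by
      apply WSP.sum_le_sum_inj _ _ _ _ (fun p => p.1)
      · intro u _; exact hwh0 u
      · intro p hp hne; exact (hfactsA p hp hne).1
      · intro p hp hne; exact le_of_eq (hfactsA p hp hne).2.2
      · intro p hp hne p' hp' hne' heq
        have h2 := (hfactsA p hp hne).2.1
        have h2' := (hfactsA p' hp' hne').2.1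
        exact Prod.ext_iff.mpr ⟨heq, by rw [h2, h2', heq]⟩
    have hB0 : ∑ p ∈ Q ×ˢ Q, fB0 p ≤
        ∑ p ∈ Qp ×ˢ Qp, (if p.1 ⊆ p.2 ∧ (p.2 \ p.1).card = 1 then min (a p.1) (a p.2) else 0) := by
      apply WSP.sum_le_sum_inj _ _ _ _ id
      · intro p _; split_ifs
        · exact le_min (ha0 _) (ha0 _)
        · exact le_refl 0
      · intro p hp hne
        have hcnd : (p.1 ⊆ p.2 ∧ (p.2 \ p.1).card = 1) ∧ i ∉ p.2 \ p.1 ∧ i ∉ p.1 := by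
          by_contra hc; rw [hfB0def] at hne; exact hne (if_neg hc)
        have hip2 : i ∉ p.2 := by
          intro hc
          exact hcnd.2.1 (Finset.mem_sdiff.mpr ⟨hc, hcnd.2.2⟩)
        have hp1Q0 : p.1 ∈ Q0 := Finset.mem_filter.mpr ⟨(Finset.mem_product.mp hp).1, hcnd.2.2⟩
        have hp2Q0 : p.2 ∈ Q0 := Finset.mem_filter.mpr ⟨(Finset.mem_product.mp hp).2, hip2⟩
        exact Finset.mem_product.mpr ⟨Finset.mem_union_left _ hp1Q0, Finset.mem_union_left _ hp2Q0⟩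
      · intro p hp hne
        have hcnd : (p.1 ⊆ p.2 ∧ (p.2 \ p.1).card = 1) ∧ i ∉ p.2 \ p.1 ∧ i ∉ p.1 := by
          by_contra hc; rw [hfB0def] at hne; exact hne (if_neg hc)
        have hp1Q0 : p.1 ∈ Q0 := Finset.mem_filter.mpr ⟨(Finset.mem_product.mp hp).1, hcnd.2.2⟩
        have hip2 : i ∉ p.2 := by
          intro hc; exact hcnd.2.1 (Finset.mem_sdiff.mpr ⟨hc, hcnd.2.2⟩)
        have hp2Q0 : p.2 ∈ Q0 := Finset.mem_filter.mpr ⟨(Finset.mem_product.mp hp).2, hip2⟩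
        have h1 : fB0 p = min (w p.1) (w p.2) := by rw [hfB0def]; exact if_pos hcnd
        rw [h1]
        simp only [id]
        rw [if_pos hcnd.1]
        have ha1 : a p.1 = w p.1 := by simp only [hadef]; rw [if_pos hp1Q0]
        have ha2 : a p.2 = w p.2 := by simp only [hadef]; rw [if_pos hp2Q0]
        rw [ha1, ha2]
      · intro p _ _ p' _ _ h; exact h
    have hfactsB1 : ∀ p : Finset β × Finset β, p ∈ Q ×ˢ Q → fB1 p ≠ 0 →
        (p.1 ⊆ p.2 ∧ (p.2 \ p.1).card = 1) ∧ i ∈ p.1 ∧ i ∈ p.2 ∧ p.1 ∈ Q1 ∧ p.2 ∈ Q1 ∧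
          p.2.erase i \ p.1.erase i = p.2 \ p.1 := by
      intro p hp hne
      have hcnd : (p.1 ⊆ p.2 ∧ (p.2 \ p.1).card = 1) ∧ i ∉ p.2 \ p.1 ∧ i ∈ p.1 := by
        by_contra hc; rw [hfB1def] at hne; exact hne (if_neg hc)
      have hip1 : i ∈ p.1 := hcnd.2.2
      have hip2 : i ∈ p.2 := hcnd.1.1 hip1
      refine ⟨hcnd.1, hip1, hip2, Finset.mem_filter.mpr ⟨(Finset.mem_product.mp hp).1, hip1⟩,
        Finset.mem_filter.mpr ⟨(Finset.mem_product.mp hp).2, hip2⟩, ?_⟩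
      ext x
      simp only [Finset.mem_sdiff, Finset.mem_erase]
      by_cases hx : x = i
      · subst hx; simp [hip1]
      · simp [hx]
    have hB1 : ∑ p ∈ Q ×ˢ Q, fB1 p ≤
        ∑ p ∈ Qp ×ˢ Qp, (if p.1 ⊆ p.2 ∧ (p.2 \ p.1).card = 1 then min (b p.1) (b p.2) else 0) := by
      apply WSP.sum_le_sum_inj _ _ _ _ (fun p => (p.1.erase i, p.2.erase i))
      · intro p _; split_ifs
        · exact le_min (hb0 _) (hb0 _)
        · exact le_refl 0
      · intro p hp hne
        obtain ⟨hcnd, hip1, hip2, hp1Q1, hp2Q1, hdiffeq⟩ := hfactsB1 p hp hne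
        have h1 : p.1.erase i ∈ Q1' := Finset.mem_image_of_mem _ hp1Q1
        have h2 : p.2.erase i ∈ Q1' := Finset.mem_image_of_mem _ hp2Q1
        exact Finset.mem_product.mpr ⟨Finset.mem_union_right _ h1, Finset.mem_union_right _ h2⟩
      · intro p hp hne
        obtain ⟨hcnd, hip1, hip2, hp1Q1, hp2Q1, hdiffeq⟩ := hfactsB1 p hp hne
        have hv : fB1 p = min (w p.1) (w p.2) := by
          rw [hfB1def]
          refine if_pos ⟨hcnd, fun hc => (Finset.mem_sdiff.mp hc).2 hip1, hip1⟩
        rw [hv, if_pos ⟨Finset.erase_subset_erase _ hcnd.1, by rw [hdiffeq]; exact hcnd.2⟩]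
        have hb1 : b (p.1.erase i) = w p.1 := by
          simp only [hbdef]
          rw [Finset.insert_erase hip1, if_pos hp1Q1]
        have hb2 : b (p.2.erase i) = w p.2 := by
          simp only [hbdef]
          rw [Finset.insert_erase hip2, if_pos hp2Q1]
        rw [hb1, hb2]
      · intro p hp hne p' hp' hne' heq
        obtain ⟨_, hip1, hip2, _, _, _⟩ := hfactsB1 p hp hne
        obtain ⟨_, hip1', hip2', _, _, _⟩ := hfactsB1 p' hp' hne'
        have e1 : p.1.erase i = p'.1.erase i := congrArg Prod.fst heq
        have e2 : p.2.erase i = p'.2.erase i := congrArg Prod.snd heq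
        refine Prod.ext_iff.mpr ⟨?_, ?_⟩
        · rw [← Finset.insert_erase hip1, e1, Finset.insert_erase hip1']
        · rw [← Finset.insert_erase hip2, e2, Finset.insert_erase hip2']
    -- combine B parts via the four-value inequality
    have hfour : ∑ p ∈ Qp ×ˢ Qp, (if p.1 ⊆ p.2 ∧ (p.2 \ p.1).card = 1 then min (a p.1) (a p.2) else 0)
        + ∑ p ∈ Qp ×ˢ Qp, (if p.1 ⊆ p.2 ∧ (p.2 \ p.1).card = 1 then min (b p.1) (b p.2) else 0)
        ≤ ∑ p ∈ Qp ×ˢ Qp, (if p.1 ⊆ p.2 ∧ (p.2 \ p.1).card = 1 then min (wt p.1) (wt p.2) else 0)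
        + ∑ p ∈ Qp ×ˢ Qp, (if p.1 ⊆ p.2 ∧ (p.2 \ p.1).card = 1 then min (wh p.1) (wh p.2) else 0) := by
      rw [← Finset.sum_add_distrib, ← Finset.sum_add_distrib]
      apply Finset.sum_le_sum
      intro p _
      split_ifs with h
      · simp only [hwtdef, hwhdef]
        exact WSP.four_min _ _ _ _
      · simp
    have hwtsum : ∑ p ∈ Qp ×ˢ Qp, (if p.1 ⊆ p.2 ∧ (p.2 \ p.1).card = 1 then min (wt p.1) (wt p.2) else 0)
        ≤ d * ∑ u ∈ Qp, wt u := IH d Qp hQpsub hVCp wt hwt0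
    have hDQp : D ⊆ Qp := (Finset.inter_subset_left).trans Finset.subset_union_left
    have hwhrestrict : ∑ p ∈ Qp ×ˢ Qp, (if p.1 ⊆ p.2 ∧ (p.2 \ p.1).card = 1 then min (wh p.1) (wh p.2) else 0)
        = ∑ p ∈ D ×ˢ D, (if p.1 ⊆ p.2 ∧ (p.2 \ p.1).card = 1 then min (wh p.1) (wh p.2) else 0) := by
      symm
      apply Finset.sum_subset (Finset.product_subset_product hDQp hDQp)
      intro p hp hnp
      have hp1 : p.1 ∈ Qp := (Finset.mem_product.mp hp).1
      have hp2 : p.2 ∈ Qp := (Finset.mem_product.mp hp).2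
      have : p.1 ∉ D ∨ p.2 ∉ D := by
        by_contra hc; push_neg at hc
        exact hnp (Finset.mem_product.mpr hc)
      split_ifs with h
      · rcases this with h1 | h1
        · rw [hwh_zero _ hp1 h1]
          exact min_eq_left (hwh0 _)
        · rw [hwh_zero _ hp2 h1]
          exact min_eq_right (hwh0 _)
      · rfl
    have hwhsum : ∑ p ∈ D ×ˢ D, (if p.1 ⊆ p.2 ∧ (p.2 \ p.1).card = 1 then min (wh p.1) (wh p.2) else 0)
        ≤ (d - 1 : ℕ) * ∑ u ∈ D, wh u := IH (d-1) D (fun u hu => hQpsub u (hDQp hu)) hVCD wh hwh0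
    -- accounting
    have hsum_a : ∑ u ∈ Qp, a u = ∑ u ∈ Q0, w u := by
      rw [← Finset.sum_subset (Finset.subset_union_left : Q0 ⊆ Qp)
        (fun x _ hx => by simp only [hadef]; rw [if_neg hx])]
      apply Finset.sum_congr rfl
      intro u hu; simp only [hadef]; rw [if_pos hu]
    have hsum_b : ∑ u ∈ Qp, b u = ∑ q ∈ Q1, w q := by
      have h1 : ∑ u ∈ Qp, b u = ∑ u ∈ Q1', b u := by
        symm
        apply Finset.sum_subset (Finset.subset_union_right : Q1' ⊆ Qp)
        intro u hu hnu
        simp only [hbdef]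
        rw [if_neg]
        intro hc
        exact hnu (hQ1'of u (hnotiQp u hu) hc)
      rw [h1]
      apply Finset.sum_nbij' (fun u => insert i u) (fun q => q.erase i)
      · intro u hu; exact (hQ1'i u hu).2
      · intro q hq; exact Finset.mem_image_of_mem _ hq
      · intro u hu; exact Finset.erase_insert (hQ1'i u hu).1
      · intro q hq; exact Finset.insert_erase (Finset.mem_filter.mp hq).2
      · intro u hu; simp only [hbdef]; rw [if_pos (hQ1'i u hu).2]
    have hsum_w : ∑ u ∈ Q0, w u + ∑ q ∈ Q1, w q = ∑ q ∈ Q, w q := by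
      rw [hQ0def, hQ1def]
      have := Finset.sum_filter_add_sum_filter_not Q (fun q => i ∉ q) w
      rw [← this]
      congr 1
      apply Finset.sum_congr _ (fun _ _ => rfl)
      apply Finset.filter_congr
      intro q _
      simp [not_not]
    have hsum_whQp : ∑ u ∈ Qp, wh u = ∑ u ∈ D, wh u := by
      symm
      exact Finset.sum_subset hDQp (fun u hu hnu => hwh_zero u hu hnu)
    have htot : ∑ u ∈ Qp, wt u + ∑ u ∈ D, wh u = ∑ q ∈ Q, w q := by
      rw [← hsum_whQp, ← Finset.sum_add_distrib]
      rw [← hsum_w, ← hsum_a, ← hsum_b, ← Finset.sum_add_distrib]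
      apply Finset.sum_congr rfl
      intro u _
      simp only [hwtdef, hwhdef]
      exact max_add_min _ _
    -- put everything together
    have hLHS : (∑ p ∈ Q ×ˢ Q, if p.1 ⊆ p.2 ∧ (p.2 \ p.1).card = 1 then min (w p.1) (w p.2) else 0)
        = ∑ p ∈ Q ×ˢ Q, fA p + ∑ p ∈ Q ×ˢ Q, fB0 p + ∑ p ∈ Q ×ˢ Q, fB1 p := by
      rw [← Finset.sum_add_distrib, ← Finset.sum_add_distrib]
      exact Finset.sum_congr rfl (fun p _ => hsplit p)
    have hwhDnn : (0:ℝ) ≤ ∑ u ∈ D, wh u := Finset.sum_nonneg (fun u _ => hwh0 u)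
    rcases Finset.eq_empty_or_nonempty D with hD | hD
    · have hDz : ∑ u ∈ D, wh u = 0 := by rw [hD]; simp
      rw [hLHS, ← htot, hDz]
      have hA' := hA
      rw [hDz] at hA'
      have hwhsum' := hwhsum
      rw [hDz, mul_zero] at hwhsum'
      linarith [hB0, hB1, hfour, hwtsum, hwhrestrict.le, hwhrestrict.ge, hA']
    · have h1d := hd1 hD
      have hcast : ((d-1:ℕ):ℝ) = (d:ℝ) - 1 := by
        rw [Nat.cast_sub h1d]; simp
      rw [hLHS, ← htot]
      rw [hcast] at hwhsum
      nlinarith [hA, hB0, hB1, hfour, hwtsum, hwhrestrict, hwhsum]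

noncomputable def WSP.gainF {α : Type*} [DecidableEq α] (Fam : Finset (Finset α))
    (Y : Finset α) (x : α) : ℝ :=
  ∑ C ∈ Fam.image (fun S => S ∩ Y),
    min ((Fam.filter (fun S => S ∩ Y = C ∧ x ∉ S)).card : ℝ)
        ((Fam.filter (fun S => S ∩ Y = C ∧ x ∈ S)).card : ℝ)

lemma WSP.gainF_nonneg {α : Type*} [DecidableEq α] (Fam : Finset (Finset α))
    (Y : Finset α) (x : α) : 0 ≤ WSP.gainF Fam Y x := by
  apply Finset.sum_nonneg
  intro C _
  exact le_min (Nat.cast_nonneg _) (Nat.cast_nonneg _)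

lemma WSP.gainF_mem_zero {α : Type*} [DecidableEq α] (Fam : Finset (Finset α))
    (Y : Finset α) (x : α) (hx : x ∈ Y) : WSP.gainF Fam Y x = 0 := by
  apply Finset.sum_eq_zero
  intro C hC
  by_cases hxC : x ∈ C
  · have h0 : Fam.filter (fun S => S ∩ Y = C ∧ x ∉ S) = ∅ := by
      apply Finset.filter_eq_empty_iff.mpr
      rintro S _ ⟨hSC, hxS⟩
      exact hxS (Finset.mem_inter.mp (hSC ▸ hxC)).1
    rw [h0]
    simp
  · have h0 : Fam.filter (fun S => S ∩ Y = C ∧ x ∈ S) = ∅ := by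
      apply Finset.filter_eq_empty_iff.mpr
      rintro S _ ⟨hSC, hxS⟩
      exact hxC (hSC ▸ Finset.mem_inter.mpr ⟨hxS, hx⟩)
    rw [h0]
    simp

lemma WSP.gain_lower {α : Type*} [Fintype α] [DecidableEq α] (μ : α → ℝ)
    (hμ0 : ∀ x, 0 ≤ μ x) (Fam : Finset (Finset α)) (δ : ℝ)
    (hsep : ∀ S ∈ Fam, ∀ R ∈ Fam, S ≠ R → δ ≤ ∑ x ∈ (S \ R) ∪ (R \ S), μ x)
    (Y : Finset α) :
    δ/2 * ((Fam.card : ℝ) - ((Fam.image (fun S => S ∩ Y)).card : ℝ))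
      ≤ ∑ x, μ x * WSP.gainF Fam Y x := by
  classical
  have hswap : ∑ x, μ x * WSP.gainF Fam Y x
      = ∑ C ∈ Fam.image (fun S => S ∩ Y), ∑ x, μ x *
          min ((Fam.filter (fun S => S ∩ Y = C ∧ x ∉ S)).card : ℝ)
              ((Fam.filter (fun S => S ∩ Y = C ∧ x ∈ S)).card : ℝ) := by
    rw [Finset.sum_comm]
    apply Finset.sum_congr rfl
    intro x _
    rw [WSP.gainF, Finset.mul_sum]
  rw [hswap]
  -- per-cell bound
  have hcell : ∀ C ∈ Fam.image (fun S => S ∩ Y),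
      δ/2 * (((Fam.filter (fun S => S ∩ Y = C)).card : ℝ) - 1)
        ≤ ∑ x, μ x *
          min ((Fam.filter (fun S => S ∩ Y = C ∧ x ∉ S)).card : ℝ)
              ((Fam.filter (fun S => S ∩ Y = C ∧ x ∈ S)).card : ℝ) := by
    intro C hC
    set F := Fam.filter (fun S => S ∩ Y = C) with hFdef
    have hFne : F.Nonempty := by
      rcases Finset.mem_image.mp hC with ⟨S₀, hS₀, hS₀C⟩
      exact ⟨S₀, Finset.mem_filter.mpr ⟨hS₀, hS₀C⟩⟩
    have hFpos : (0:ℝ) < (F.card : ℝ) := by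
      exact_mod_cast Finset.card_pos.mpr hFne
    set w0 : α → ℝ := fun x => ((F.filter (fun S => x ∉ S)).card : ℝ) with hw0def
    set w1 : α → ℝ := fun x => ((F.filter (fun S => x ∈ S)).card : ℝ) with hw1def
    have hfilter0 : ∀ x, Fam.filter (fun S => S ∩ Y = C ∧ x ∉ S) = F.filter (fun S => x ∉ S) := by
      intro x; rw [hFdef, Finset.filter_filter]
    have hfilter1 : ∀ x, Fam.filter (fun S => S ∩ Y = C ∧ x ∈ S) = F.filter (fun S => x ∈ S) := by
      intro x; rw [hFdef, Finset.filter_filter]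
    have hw01 : ∀ x, w0 x + w1 x = (F.card : ℝ) := by
      intro x
      have := Finset.card_filter_add_card_filter_not (s := F) (p := fun S => x ∈ S)
      have h2 : (F.filter (fun S => x ∈ S)).card + (F.filter (fun S => x ∉ S)).card = F.card := this
      simp only [hw0def, hw1def]
      push_cast [← h2]
      ring
    -- quadratic bound from separation
    have hq : ∑ x, μ x * (w0 x * w1 x) = ∑ S ∈ F, ∑ R ∈ F, ∑ x ∈ R \ S, μ x := by
      have h1 : ∀ x, μ x * (w0 x * w1 x)
          = ∑ S ∈ F, ∑ R ∈ F, (if x ∈ R \ S then μ x else 0) := by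
        intro x
        have hw0e : w0 x = ∑ S ∈ F, (if x ∉ S then (1:ℝ) else 0) := by
          simp only [hw0def]
          rw [Finset.card_filter]
          push_cast
          rfl
        have hw1e : w1 x = ∑ R ∈ F, (if x ∈ R then (1:ℝ) else 0) := by
          simp only [hw1def]
          rw [Finset.card_filter]
          push_cast
          rfl
        rw [hw0e, hw1e, Finset.sum_mul_sum, Finset.mul_sum]
        apply Finset.sum_congr rfl
        intro S _
        rw [Finset.mul_sum]
        apply Finset.sum_congr rfl
        intro R _
        by_cases h0 : x ∈ S <;> by_cases h1 : x ∈ R <;>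
          simp [h0, h1, Finset.mem_sdiff]
      calc ∑ x, μ x * (w0 x * w1 x)
          = ∑ x, ∑ S ∈ F, ∑ R ∈ F, (if x ∈ R \ S then μ x else 0) := by
            exact Finset.sum_congr rfl (fun x _ => h1 x)
        _ = ∑ S ∈ F, ∑ x : α, ∑ R ∈ F, (if x ∈ R \ S then μ x else 0) := Finset.sum_comm
        _ = ∑ S ∈ F, ∑ R ∈ F, ∑ x : α, (if x ∈ R \ S then μ x else 0) := by
            exact Finset.sum_congr rfl (fun S _ => Finset.sum_comm)
        _ = ∑ S ∈ F, ∑ R ∈ F, ∑ x ∈ R \ S, μ x := by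
            apply Finset.sum_congr rfl; intro S _
            apply Finset.sum_congr rfl; intro R _
            rw [Finset.sum_ite_mem, Finset.univ_inter]
    have hsep2 : δ * ((F.card : ℝ) * ((F.card : ℝ) - 1)) ≤ 2 * ∑ S ∈ F, ∑ R ∈ F, ∑ x ∈ R \ S, μ x := by
      have hdouble : ∑ S ∈ F, ∑ R ∈ F, ((∑ x ∈ S \ R, μ x) + (∑ x ∈ R \ S, μ x))
          = 2 * ∑ S ∈ F, ∑ R ∈ F, ∑ x ∈ R \ S, μ x := by
        have e1 : ∑ S ∈ F, ∑ R ∈ F, ((∑ x ∈ S \ R, μ x) + (∑ x ∈ R \ S, μ x))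
            = (∑ S ∈ F, ∑ R ∈ F, ∑ x ∈ S \ R, μ x) + (∑ S ∈ F, ∑ R ∈ F, ∑ x ∈ R \ S, μ x) := by
          rw [← Finset.sum_add_distrib]
          apply Finset.sum_congr rfl
          intro S _
          rw [← Finset.sum_add_distrib]
        have e2 : ∑ S ∈ F, ∑ R ∈ F, ∑ x ∈ S \ R, μ x = ∑ S ∈ F, ∑ R ∈ F, ∑ x ∈ R \ S, μ x :=
          Finset.sum_comm
        rw [e1, e2]; ring
      have hlow : ∑ S ∈ F, ∑ R ∈ F, (if S = R then (0:ℝ) else δ)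
          ≤ ∑ S ∈ F, ∑ R ∈ F, ((∑ x ∈ S \ R, μ x) + (∑ x ∈ R \ S, μ x)) := by
        apply Finset.sum_le_sum; intro S hS
        apply Finset.sum_le_sum; intro R hR
        by_cases h : S = R
        · subst h
          rw [if_pos rfl, Finset.sdiff_self]
          simp
        · rw [if_neg h]
          have hs := hsep S (Finset.mem_filter.mp hS).1 R (Finset.mem_filter.mp hR).1 h
          rw [Finset.sum_union (disjoint_sdiff_sdiff)] at hs
          exact hs
      have hinner : ∀ S ∈ F, ∑ R ∈ F, (if S = R then (0:ℝ) else δ) = (F.card : ℝ) * δ - δ := by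
        intro S hS
        have e : ∀ R, (if S = R then (0:ℝ) else δ) = δ - (if S = R then δ else 0) := by
          intro R; split_ifs <;> ring
        rw [Finset.sum_congr rfl (fun R _ => e R), Finset.sum_sub_distrib,
          Finset.sum_ite_eq F S (fun _ => δ), if_pos hS, Finset.sum_const]
        rw [nsmul_eq_mul]
      have hcount : ∑ S ∈ F, ∑ R ∈ F, (if S = R then (0:ℝ) else δ)
          = (F.card : ℝ) * ((F.card : ℝ) * δ - δ) := by
        rw [Finset.sum_congr rfl hinner, Finset.sum_const, nsmul_eq_mul]
      nlinarith [hlow, hdouble, hcount]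
    have hmin : ∀ x, w0 x * w1 x ≤ (F.card : ℝ) * min (w0 x) (w1 x) := by
      intro x
      have h0 : (0:ℝ) ≤ w0 x := Nat.cast_nonneg _
      have h1 : (0:ℝ) ≤ w1 x := Nat.cast_nonneg _
      rcases le_total (w0 x) (w1 x) with h | h
      · rw [min_eq_left h, ← hw01 x]; nlinarith
      · rw [min_eq_right h, ← hw01 x]; nlinarith
    have hT : ∑ x, μ x * (w0 x * w1 x) ≤ (F.card : ℝ) * ∑ x, μ x * min (w0 x) (w1 x) := by
      rw [Finset.mul_sum]
      apply Finset.sum_le_sum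
      intro x _
      calc μ x * (w0 x * w1 x) ≤ μ x * ((F.card:ℝ) * min (w0 x) (w1 x)) :=
            mul_le_mul_of_nonneg_left (hmin x) (hμ0 x)
        _ = (F.card:ℝ) * (μ x * min (w0 x) (w1 x)) := by ring
    have hgoal2 : δ/2 * ((F.card : ℝ) - 1) ≤ ∑ x, μ x * min (w0 x) (w1 x) := by
      have hchain : (F.card : ℝ) * (δ/2 * ((F.card : ℝ) - 1))
          ≤ (F.card : ℝ) * ∑ x, μ x * min (w0 x) (w1 x) := by
        rw [hq] at hT
        nlinarith [hsep2, hT]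
      exact le_of_mul_le_mul_left hchain hFpos
    calc δ/2 * ((F.card : ℝ) - 1) ≤ ∑ x, μ x * min (w0 x) (w1 x) := hgoal2
      _ = ∑ x, μ x * min ((Fam.filter (fun S => S ∩ Y = C ∧ x ∉ S)).card : ℝ)
            ((Fam.filter (fun S => S ∩ Y = C ∧ x ∈ S)).card : ℝ) := by
        apply Finset.sum_congr rfl
        intro x _
        rw [hfilter0 x, hfilter1 x]
  -- sum the per-cell bounds
  have hfw : ∑ C ∈ Fam.image (fun S => S ∩ Y), ((Fam.filter (fun S => S ∩ Y = C)).card : ℝ)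
      = (Fam.card : ℝ) := by
    rw [← Nat.cast_sum]
    norm_cast
    exact (Finset.card_eq_sum_card_fiberwise (fun S hS => Finset.mem_image_of_mem _ hS)).symm
  have hsum : ∑ C ∈ Fam.image (fun S => S ∩ Y), δ/2 * (((Fam.filter (fun S => S ∩ Y = C)).card : ℝ) - 1)
      = δ/2 * ((Fam.card : ℝ) - ((Fam.image (fun S => S ∩ Y)).card : ℝ)) := by
    rw [← Finset.mul_sum, Finset.sum_sub_distrib, hfw, Finset.sum_const]
    simp
  rw [← hsum]
  exact Finset.sum_le_sum hcell

lemma WSP.gain_upper {α : Type*} [Fintype α] [DecidableEq α] (Fam : Finset (Finset α)) (d : ℕ)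
    (hVC : ∀ S : Finset α, (∀ T ⊆ S, ∃ R ∈ Fam, R ∩ S = T) → S.card ≤ d)
    {n : ℕ} (ω : Fin n → α) :
    ∑ j, WSP.gainF Fam ((Finset.univ.erase j).image ω) (ω j) ≤ d * (Fam.card : ℝ) := by
  classical
  set Y := Finset.univ.image ω with hYdef
  set Q := Fam.image (fun S => S ∩ Y) with hQdef
  set wQ : Finset α → ℝ := fun C => ((Fam.filter (fun S => S ∩ Y = C)).card : ℝ) with hwQdef
  have hwQ0 : ∀ C, 0 ≤ wQ C := fun C => Nat.cast_nonneg _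
  -- Step A : collapse coordinates to points of Y
  have hstepA : ∑ j, WSP.gainF Fam ((Finset.univ.erase j).image ω) (ω j)
      ≤ ∑ y ∈ Y, WSP.gainF Fam (Y.erase y) y := by
    apply WSP.sum_le_sum_inj _ _ _ _ (fun j => ω j)
    · intro y _; exact WSP.gainF_nonneg _ _ _
    · intro j _ _; exact Finset.mem_image_of_mem _ (Finset.mem_univ j)
    · intro j _ hne
      have h1 : ω j ∉ (Finset.univ.erase j).image ω := by
        intro hc
        exact hne (WSP.gainF_mem_zero _ _ _ hc)
      have h2 : (Finset.univ.erase j).image ω = Y.erase (ω j) := by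
        apply Finset.Subset.antisymm
        · intro z hz
          rcases Finset.mem_image.mp hz with ⟨i, hi, rfl⟩
          refine Finset.mem_erase.mpr ⟨?_, Finset.mem_image_of_mem _ (Finset.mem_univ i)⟩
          intro hc
          exact h1 (hc ▸ Finset.mem_image_of_mem _ hi)
        · intro z hz
          rcases Finset.mem_erase.mp hz with ⟨hz1, hz2⟩
          rcases Finset.mem_image.mp hz2 with ⟨i, _, rfl⟩
          have hij : i ≠ j := fun hc => hz1 (by rw [hc])
          exact Finset.mem_image_of_mem _ (Finset.mem_erase.mpr ⟨hij, Finset.mem_univ i⟩)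
      rw [h2]
    · intro j _ hne j' _ hne' heq
      by_contra hjj
      have h1 : ω j ∈ (Finset.univ.erase j).image ω := by
        apply Finset.mem_image.mpr
        exact ⟨j', Finset.mem_erase.mpr ⟨fun hc => hjj (hc.symm ▸ rfl), Finset.mem_univ j'⟩, heq.symm⟩
      exact hne (WSP.gainF_mem_zero _ _ _ h1)
  -- rewrite each G y as a sum over cells with wQ weights
  have hGy : ∀ y ∈ Y, WSP.gainF Fam (Y.erase y) y
      = ∑ C ∈ Fam.image (fun S => S ∩ (Y.erase y)), min (wQ C) (wQ (insert y C)) := by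
    intro y hy
    rw [WSP.gainF]
    apply Finset.sum_congr rfl
    intro C hC
    rcases Finset.mem_image.mp hC with ⟨S₀, _, hS₀C⟩
    have hCsub : C ⊆ Y.erase y := hS₀C ▸ Finset.inter_subset_right
    have hyC : y ∉ C := fun hc => (Finset.mem_erase.mp (hCsub hc)).1 rfl
    have e0 : Fam.filter (fun S => S ∩ (Y.erase y) = C ∧ y ∉ S)
        = Fam.filter (fun S => S ∩ Y = C) := by
      apply Finset.filter_congr
      intro S _
      constructor
      · rintro ⟨h1, h2⟩
        ext x
        constructor
        · intro hx
          rcases Finset.mem_inter.mp hx with ⟨hx1, hx2⟩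
          have hxy : x ≠ y := fun hc => h2 (hc ▸ hx1)
          exact h1 ▸ Finset.mem_inter.mpr ⟨hx1, Finset.mem_erase.mpr ⟨hxy, hx2⟩⟩
        · intro hx
          have hx' := h1 ▸ hx
          rcases Finset.mem_inter.mp hx' with ⟨hx1, hx2⟩
          exact Finset.mem_inter.mpr ⟨hx1, (Finset.mem_erase.mp hx2).2⟩
      · intro h1
        have h2 : y ∉ S := fun hc => hyC (h1 ▸ Finset.mem_inter.mpr ⟨hc, hy⟩)
        refine ⟨?_, h2⟩
        ext x
        constructor
        · intro hx
          rcases Finset.mem_inter.mp hx with ⟨hx1, hx2⟩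
          exact h1 ▸ Finset.mem_inter.mpr ⟨hx1, (Finset.mem_erase.mp hx2).2⟩
        · intro hx
          have hx' := h1 ▸ hx
          rcases Finset.mem_inter.mp hx' with ⟨hx1, hx2⟩
          have hxy : x ≠ y := fun hc => h2 (hc ▸ hx1)
          exact Finset.mem_inter.mpr ⟨hx1, Finset.mem_erase.mpr ⟨hxy, hx2⟩⟩
    have e1 : Fam.filter (fun S => S ∩ (Y.erase y) = C ∧ y ∈ S)
        = Fam.filter (fun S => S ∩ Y = insert y C) := by
      apply Finset.filter_congr
      intro S _
      constructor
      · rintro ⟨h1, h2⟩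
        ext x
        constructor
        · intro hx
          rcases Finset.mem_inter.mp hx with ⟨hx1, hx2⟩
          by_cases hxy : x = y
          · exact hxy ▸ Finset.mem_insert_self _ _
          · exact Finset.mem_insert_of_mem
              (h1 ▸ Finset.mem_inter.mpr ⟨hx1, Finset.mem_erase.mpr ⟨hxy, hx2⟩⟩)
        · intro hx
          rcases Finset.mem_insert.mp hx with rfl | hx'
          · exact Finset.mem_inter.mpr ⟨h2, hy⟩
          · have := h1 ▸ hx'
            rcases Finset.mem_inter.mp this with ⟨hx1, hx2⟩
            exact Finset.mem_inter.mpr ⟨hx1, (Finset.mem_erase.mp hx2).2⟩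
      · intro h1
        have h2 : y ∈ S := by
          have : y ∈ S ∩ Y := h1 ▸ Finset.mem_insert_self _ _
          exact (Finset.mem_inter.mp this).1
        refine ⟨?_, h2⟩
        ext x
        constructor
        · intro hx
          rcases Finset.mem_inter.mp hx with ⟨hx1, hx2⟩
          rcases Finset.mem_erase.mp hx2 with ⟨hxy, hx3⟩
          have : x ∈ S ∩ Y := Finset.mem_inter.mpr ⟨hx1, hx3⟩
          rcases Finset.mem_insert.mp (h1 ▸ this) with hc | hc
          · exact absurd hc hxy
          · exact hc
        · intro hx
          have hxy : x ≠ y := fun hc => hyC (hc ▸ hx)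
          have : x ∈ S ∩ Y := h1 ▸ Finset.mem_insert_of_mem hx
          rcases Finset.mem_inter.mp this with ⟨hx1, hx2⟩
          exact Finset.mem_inter.mpr ⟨hx1, Finset.mem_erase.mpr ⟨hxy, hx2⟩⟩
    show min ((Fam.filter (fun S => S ∩ (Y.erase y) = C ∧ y ∉ S)).card : ℝ)
        ((Fam.filter (fun S => S ∩ (Y.erase y) = C ∧ y ∈ S)).card : ℝ)
        = min (wQ C) (wQ (insert y C))
    rw [e0, e1]
  have hstepB : ∑ y ∈ Y, WSP.gainF Fam (Y.erase y) y
      ≤ ∑ p ∈ Q ×ˢ Q, (if p.1 ⊆ p.2 ∧ (p.2 \ p.1).card = 1 then min (wQ p.1) (wQ p.2) else 0) := by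
    rw [Finset.sum_congr rfl hGy]
    rw [Finset.sum_sigma' Y (fun y => Fam.image (fun S => S ∩ (Y.erase y)))
      (fun y C => min (wQ C) (wQ (insert y C)))]
    apply WSP.sum_le_sum_inj _ _ _ _ (fun p => (p.2, insert p.1 p.2))
    · intro p _
      split_ifs
      · exact le_min (hwQ0 _) (hwQ0 _)
      · exact le_refl 0
    · rintro ⟨y, C⟩ hyC hne
      rcases Finset.mem_sigma.mp hyC with ⟨hy, hC⟩
      have hne' : min (wQ C) (wQ (insert y C)) ≠ 0 := hne
      have h1 : wQ C ≠ 0 := by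
        intro hc
        apply hne'
        rw [hc]
        exact min_eq_left (hwQ0 (insert y C))
      have h2 : wQ (insert y C) ≠ 0 := by
        intro hc
        apply hne'
        rw [hc]
        exact min_eq_right (hwQ0 C)
      have hCQ : C ∈ Q := by
        have hpos : (Fam.filter (fun S => S ∩ Y = C)).Nonempty := by
          rw [← Finset.card_pos]
          rcases Nat.eq_zero_or_pos (Fam.filter (fun S => S ∩ Y = C)).card with h | h
          · exact absurd (by simp only [hwQdef]; exact_mod_cast h) h1
          · exact h
        rcases hpos with ⟨S, hS⟩
        rcases Finset.mem_filter.mp hS with ⟨hS1, hS2⟩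
        exact hS2 ▸ Finset.mem_image_of_mem _ hS1
      have hCQ' : insert y C ∈ Q := by
        have hpos : (Fam.filter (fun S => S ∩ Y = insert y C)).Nonempty := by
          rw [← Finset.card_pos]
          rcases Nat.eq_zero_or_pos (Fam.filter (fun S => S ∩ Y = insert y C)).card with h | h
          · exact absurd (by simp only [hwQdef]; exact_mod_cast h) h2
          · exact h
        rcases hpos with ⟨S, hS⟩
        rcases Finset.mem_filter.mp hS with ⟨hS1, hS2⟩
        exact hS2 ▸ Finset.mem_image_of_mem _ hS1
      exact Finset.mem_product.mpr ⟨hCQ, hCQ'⟩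
    · rintro ⟨y, C⟩ hyC hne
      rcases Finset.mem_sigma.mp hyC with ⟨hy, hC⟩
      have hC' : C ∈ Fam.image (fun S => S ∩ (Y.erase y)) := hC
      rcases Finset.mem_image.mp hC' with ⟨S₀, _, hS₀C⟩
      have hCsub : C ⊆ Y.erase y := hS₀C ▸ Finset.inter_subset_right
      have hyC' : y ∉ C := fun hc => (Finset.mem_erase.mp (hCsub hc)).1 rfl
      show min (wQ C) (wQ (insert y C))
        ≤ if C ⊆ insert y C ∧ ((insert y C) \ C).card = 1 then min (wQ C) (wQ (insert y C)) else 0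
      rw [if_pos ⟨Finset.subset_insert _ _, by rw [Finset.insert_sdiff_cancel hyC']; simp⟩]
    · rintro ⟨y, C⟩ hyC hne ⟨y', C'⟩ hyC' hne' heq
      rcases Finset.mem_sigma.mp hyC with ⟨hy, hC⟩
      have hCm : C ∈ Fam.image (fun S => S ∩ (Y.erase y)) := hC
      rcases Finset.mem_image.mp hCm with ⟨S₀, _, hS₀C⟩
      have hCsub : C ⊆ Y.erase y := hS₀C ▸ Finset.inter_subset_right
      have hyCn : y ∉ C := fun hc => (Finset.mem_erase.mp (hCsub hc)).1 rfl
      have e1 : C = C' := congrArg Prod.fst heq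
      have e2 : insert y C = insert y' C' := congrArg Prod.snd heq
      have hyy : y = y' := by
        have : y ∈ insert y' C' := e2 ▸ Finset.mem_insert_self _ _
        rcases Finset.mem_insert.mp this with h | h
        · exact h
        · exact absurd (e1 ▸ h) hyCn
      subst e1; subst hyy; rfl
  -- Step C : the UD lemma
  have hstepC : ∑ p ∈ Q ×ˢ Q, (if p.1 ⊆ p.2 ∧ (p.2 \ p.1).card = 1 then min (wQ p.1) (wQ p.2) else 0)
      ≤ d * ∑ C ∈ Q, wQ C := by
    apply WSP.ud Y d Q
    · intro q hq
      rcases Finset.mem_image.mp hq with ⟨S, _, rfl⟩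
      exact Finset.inter_subset_right
    · intro S hSY hsh
      apply hVC S
      intro T hT
      obtain ⟨C, hCQ, hCT⟩ := hsh T hT
      rcases Finset.mem_image.mp hCQ with ⟨R, hR, rfl⟩
      refine ⟨R, hR, ?_⟩
      rw [← hCT, Finset.inter_assoc, Finset.inter_eq_right.mpr hSY]
    · exact hwQ0
  have hfw : ∑ C ∈ Q, wQ C = (Fam.card : ℝ) := by
    simp only [hwQdef]
    rw [← Nat.cast_sum]
    norm_cast
    exact (Finset.card_eq_sum_card_fiberwise (fun S hS => Finset.mem_image_of_mem _ hS)).symm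
  calc ∑ j, WSP.gainF Fam ((Finset.univ.erase j).image ω) (ω j)
      ≤ ∑ y ∈ Y, WSP.gainF Fam (Y.erase y) y := hstepA
    _ ≤ _ := hstepB
    _ ≤ d * ∑ C ∈ Q, wQ C := hstepC
    _ = d * (Fam.card : ℝ) := by rw [hfw]

noncomputable def WSP.Pr {α : Type*} [Fintype α] (μ : α → ℝ) {t : ℕ} (ω : Fin t → α) : ℝ :=
  ∏ i, μ (ω i)

lemma WSP.Pr_nonneg {α : Type*} [Fintype α] (μ : α → ℝ) (hμ0 : ∀ x, 0 ≤ μ x) {t : ℕ}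
    (ω : Fin t → α) : 0 ≤ WSP.Pr μ ω :=
  Finset.prod_nonneg fun i _ => hμ0 _

lemma WSP.Pr_total {α : Type*} [Fintype α] [DecidableEq α] (μ : α → ℝ) (hμ1 : ∑ x, μ x = 1)
    (t : ℕ) : ∑ ω : Fin t → α, WSP.Pr μ ω = 1 := by
  have h := Finset.prod_univ_sum (fun _ : Fin t => (Finset.univ : Finset α)) (fun _ x => μ x)
  rw [Fintype.piFinset_univ] at h
  calc ∑ ω : Fin t → α, WSP.Pr μ ω = ∏ _i : Fin t, ∑ x, μ x := h.symm
    _ = 1 := by rw [hμ1]; simp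

lemma WSP.Pr_cons {α : Type*} [Fintype α] (μ : α → ℝ) {t : ℕ} (x : α) (ω' : Fin t → α) :
    WSP.Pr μ (Fin.cons x ω') = μ x * WSP.Pr μ ω' := by
  rw [WSP.Pr, Fin.prod_univ_succ]
  simp [WSP.Pr]

lemma WSP.sum_cons {α : Type*} [Fintype α] [DecidableEq α] (μ : α → ℝ) (t : ℕ)
    (g : (Fin (t+1) → α) → ℝ) :
    ∑ ω : Fin (t+1) → α, WSP.Pr μ ω * g ω
      = ∑ x : α, ∑ ω' : Fin t → α, μ x * (WSP.Pr μ ω' * g (Fin.cons x ω')) := by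
  rw [← Equiv.sum_comp (Fin.consEquiv (fun _ : Fin (t+1) => α))
    (fun ω => WSP.Pr μ ω * g ω), Fintype.sum_prod_type]
  apply Finset.sum_congr rfl
  intro x _
  apply Finset.sum_congr rfl
  intro ω' _
  show WSP.Pr μ (Fin.cons x ω') * g (Fin.cons x ω') = _
  rw [WSP.Pr_cons]
  ring

lemma WSP.sum_perm {α : Type*} [Fintype α] [DecidableEq α] (μ : α → ℝ) {t : ℕ}
    (e : Fin t ≃ Fin t) (g : (Fin t → α) → ℝ) :
    ∑ ω : Fin t → α, WSP.Pr μ ω * g (ω ∘ e) = ∑ ω : Fin t → α, WSP.Pr μ ω * g ω := by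
  apply Fintype.sum_equiv (Equiv.arrowCongr e.symm (Equiv.refl α))
  intro ω
  have h1 : (Equiv.arrowCongr e.symm (Equiv.refl α)) ω = ω ∘ e := by
    funext i
    simp
  rw [h1]
  have h2 : WSP.Pr μ (ω ∘ e) = WSP.Pr μ ω := by
    rw [WSP.Pr, WSP.Pr]
    exact Equiv.prod_comp e (fun i => μ (ω i))
  rw [h2]

lemma WSP.sum_coord {α : Type*} [Fintype α] [DecidableEq α] (μ : α → ℝ) (hμ1 : ∑ x, μ x = 1)
    {t : ℕ} (i : Fin (t+1)) (F : α → ℝ) :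
    ∑ ω : Fin (t+1) → α, WSP.Pr μ ω * F (ω i) = ∑ x, μ x * F x := by
  have h0 : ∑ ω : Fin (t+1) → α, WSP.Pr μ ω * F (ω 0) = ∑ x, μ x * F x := by
    rw [WSP.sum_cons μ t (fun ω => F (ω 0))]
    apply Finset.sum_congr rfl
    intro x _
    have : ∀ ω' : Fin t → α, μ x * (WSP.Pr μ ω' * F ((Fin.cons x ω' : Fin (t+1) → α) 0))
        = μ x * F x * WSP.Pr μ ω' := by
      intro ω'
      have hz : (Fin.cons x ω' : Fin (t+1) → α) 0 = x := rfl
      rw [hz]; ring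
    rw [Finset.sum_congr rfl (fun ω' _ => this ω'), ← Finset.mul_sum, WSP.Pr_total μ hμ1 t,
      mul_one]
  calc ∑ ω : Fin (t+1) → α, WSP.Pr μ ω * F (ω i)
      = ∑ ω : Fin (t+1) → α, WSP.Pr μ ω * (fun σ => F (σ 0)) (ω ∘ Equiv.swap 0 i) := by
        apply Finset.sum_congr rfl
        intro ω _
        simp [Equiv.swap_apply_left]
    _ = ∑ ω : Fin (t+1) → α, WSP.Pr μ ω * F (ω 0) :=
        WSP.sum_perm μ (Equiv.swap 0 i) (fun σ => F (σ 0))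
    _ = ∑ x, μ x * F x := h0

set_option maxHeartbeats 2000000 in
theorem weighted_shallow_packing {α : Type*} [Fintype α] [DecidableEq α]
    (μ : α → ℝ) (hμ0 : ∀ x, 0 ≤ μ x) (hμ1 : ∑ x, μ x = 1)
    (Fam : Finset (Finset α)) (d : ℕ) (hd : 1 ≤ d)
    (hVC : ∀ S : Finset α, (∀ T ⊆ S, ∃ R ∈ Fam, R ∩ S = T) → S.card ≤ d)
    (φ : ℝ → ℝ → ℝ)
    (hφmono : ∀ a b c e : ℝ, a ≤ c → b ≤ e → φ a b ≤ φ c e)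
    (hφ : ∀ (Y : Finset α) (k' : ℝ),
      ((((Fam.image (fun S => S ∩ Y)).filter (fun C => (C.card : ℝ) ≤ k')).card : ℝ))
        ≤ φ (Y.card : ℝ) k')
    (k δ : ℝ) (hk0 : 0 < k) (hk1 : k < 1) (hδ0 : 0 < δ) (hδ1 : δ < 1)
    (hlight : ∀ S ∈ Fam, ∑ x ∈ S, μ x ≤ k)
    (hsep : ∀ S ∈ Fam, ∀ R ∈ Fam, S ≠ R → δ ≤ ∑ x ∈ (S \ R) ∪ (R \ S), μ x) :
    (Fam.card : ℝ) ≤ (24 * d / δ) * φ (8 * d / δ) (48 * d * k / δ) := by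
  classical
  set m : ℝ := (Fam.card : ℝ) with hmdef
  have hm0 : (0:ℝ) ≤ m := Nat.cast_nonneg _
  have hd1 : (1:ℝ) ≤ (d:ℝ) := by exact_mod_cast hd
  set K : ℝ := 48 * d * k / δ with hKdef
  have hK0 : (0:ℝ) < K := by
    apply div_pos _ hδ0
    nlinarith
  set n : ℕ := ⌊(8 * (d:ℝ)) / δ⌋₊ with hndef
  have h8dδ : (8:ℝ) ≤ 8 * d / δ := by
    have h1 : (8:ℝ) * 1 ≤ 8 * d := by nlinarith
    have h2 : 8 * (d:ℝ) ≤ 8 * d / δ := by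
      rw [le_div_iff₀ hδ0]
      nlinarith
    linarith
  have hn8 : 8 ≤ n := Nat.le_floor (by exact_mod_cast h8dδ)
  have hnle : (n:ℝ) ≤ 8 * d / δ := Nat.floor_le (by linarith)
  have hδn : 7 * (d:ℝ) ≤ δ * n := by
    have h1 : (8 * (d:ℝ)) / δ < n + 1 := Nat.lt_floor_add_one _
    have h2 : 8 * (d:ℝ) < ((n:ℝ) + 1) * δ := (div_lt_iff₀ hδ0).mp h1
    nlinarith
  obtain ⟨r, hr⟩ : ∃ r, n = r + 2 := ⟨n - 2, by omega⟩
  have hrn : ((r:ℝ) + 2) = (n:ℝ) := by exact_mod_cast congrArg (Nat.cast : ℕ → ℝ) hr.symm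
  -- cell-count random variable over samples of length r+1
  set N : (Fin (r+1) → α) → ℝ :=
    fun ω' => ((Fam.image (fun S => S ∩ (Finset.univ.image ω'))).card : ℝ) with hNdef
  set EN : ℝ := ∑ ω' : Fin (r+1) → α, WSP.Pr μ ω' * N ω' with hENdef
  set gain : Fin (r+2) → (Fin (r+2) → α) → ℝ :=
    fun j ω => WSP.gainF Fam ((Finset.univ.erase j).image ω) (ω j) with hgaindef
  -- upper bound in expectation
  have hEup : ∑ ω : Fin (r+2) → α, WSP.Pr μ ω * (∑ j, gain j ω) ≤ d * m := by
    calc ∑ ω : Fin (r+2) → α, WSP.Pr μ ω * (∑ j, gain j ω)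
        ≤ ∑ ω : Fin (r+2) → α, WSP.Pr μ ω * (d * m) := by
          apply Finset.sum_le_sum
          intro ω _
          exact mul_le_mul_of_nonneg_left (WSP.gain_upper Fam d hVC ω) (WSP.Pr_nonneg μ hμ0 ω)
      _ = d * m := by
          rw [← Finset.sum_mul, WSP.Pr_total μ hμ1, one_mul]
  -- exchangeability
  have hswap : ∀ j : Fin (r+2), (∑ ω : Fin (r+2) → α, WSP.Pr μ ω * gain j ω)
      = ∑ ω : Fin (r+2) → α, WSP.Pr μ ω * gain 0 ω := by
    intro j
    have hgj : ∀ ω : Fin (r+2) → α, gain j ω = gain 0 (ω ∘ Equiv.swap 0 j) := by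
      intro ω
      have h1 : (ω ∘ Equiv.swap 0 j) 0 = ω j := by simp
      have h2 : (Finset.univ.erase (0 : Fin (r+2))).image (ω ∘ Equiv.swap 0 j)
          = (Finset.univ.erase j).image ω := by
        have e1 : (Finset.univ.erase (0 : Fin (r+2))).image (ω ∘ Equiv.swap 0 j)
            = ((Finset.univ.erase (0 : Fin (r+2))).image (Equiv.swap 0 j)).image ω := by
          rw [Finset.image_image]
        rw [e1, Finset.image_erase (Equiv.injective _),
          Finset.image_univ_of_surjective (Equiv.surjective _)]
        simp
      simp only [hgaindef]
      rw [h1, h2]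
    calc ∑ ω : Fin (r+2) → α, WSP.Pr μ ω * gain j ω
        = ∑ ω : Fin (r+2) → α, WSP.Pr μ ω * gain 0 (ω ∘ Equiv.swap 0 j) :=
          Finset.sum_congr rfl (fun ω _ => by rw [hgj ω])
      _ = ∑ ω : Fin (r+2) → α, WSP.Pr μ ω * gain 0 ω := WSP.sum_perm μ _ _
  have hcollapse : ∑ ω : Fin (r+2) → α, WSP.Pr μ ω * (∑ j, gain j ω)
      = ((r:ℝ)+2) * ∑ ω : Fin (r+2) → α, WSP.Pr μ ω * gain 0 ω := by
    have e1 : ∑ ω : Fin (r+2) → α, WSP.Pr μ ω * (∑ j, gain j ω)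
        = ∑ j : Fin (r+2), ∑ ω : Fin (r+2) → α, WSP.Pr μ ω * gain j ω := by
      rw [Finset.sum_comm]
      apply Finset.sum_congr rfl
      intro ω _
      rw [Finset.mul_sum]
    rw [e1, Finset.sum_congr rfl (fun j _ => hswap j), Finset.sum_const, Finset.card_univ,
      Fintype.card_fin, nsmul_eq_mul]
    push_cast
    ring
  -- lower bound in expectation
  have hlow : (δ/2) * (m - EN) ≤ ∑ ω : Fin (r+2) → α, WSP.Pr μ ω * gain 0 ω := by
    rw [WSP.sum_cons μ (r+1) (gain 0)]
    have hg0 : ∀ (x : α) (ω' : Fin (r+1) → α),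
        gain 0 (Fin.cons x ω') = WSP.gainF Fam (Finset.univ.image ω') x := by
      intro x ω'
      have h1 : (Fin.cons x ω' : Fin (r+2) → α) 0 = x := rfl
      have h2 : (Finset.univ.erase (0 : Fin (r+2))).image (Fin.cons x ω')
          = Finset.univ.image ω' := by
        have he : (Finset.univ.erase (0 : Fin (r+2))) = Finset.univ.image Fin.succ := by
          ext u
          simp only [Finset.mem_erase, Finset.mem_image, Finset.mem_univ, true_and, and_true]
          constructor
          · intro hu
            rcases Fin.exists_succ_eq.mpr hu with ⟨y, hy⟩
            exact ⟨y, by simpa using hy⟩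
          · rintro ⟨y, rfl⟩
            exact Fin.succ_ne_zero y
        rw [he, Finset.image_image]
        have hcomp : (Fin.cons x ω' : Fin (r+2) → α) ∘ Fin.succ = ω' := by
          funext i
          simp
        rw [hcomp]
      simp only [hgaindef]
      rw [h1, h2]
    have hre : ∑ x : α, ∑ ω' : Fin (r+1) → α, μ x * (WSP.Pr μ ω' * gain 0 (Fin.cons x ω'))
        = ∑ ω' : Fin (r+1) → α, WSP.Pr μ ω'
            * (∑ x, μ x * WSP.gainF Fam (Finset.univ.image ω') x) := by
      rw [Finset.sum_comm]
      apply Finset.sum_congr rfl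
      intro ω' _
      rw [Finset.mul_sum]
      apply Finset.sum_congr rfl
      intro x _
      rw [hg0 x ω']
      ring
    rw [hre]
    have hptw : ∀ ω' : Fin (r+1) → α, WSP.Pr μ ω' * ((δ/2) * (m - N ω'))
        ≤ WSP.Pr μ ω' * (∑ x, μ x * WSP.gainF Fam (Finset.univ.image ω') x) := by
      intro ω'
      exact mul_le_mul_of_nonneg_left
        (WSP.gain_lower μ hμ0 Fam δ hsep (Finset.univ.image ω')) (WSP.Pr_nonneg μ hμ0 ω')
    have hsumeq : ∑ ω' : Fin (r+1) → α, WSP.Pr μ ω' * ((δ/2) * (m - N ω'))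
        = (δ/2) * (m - EN) := by
      have e : ∀ ω' : Fin (r+1) → α, WSP.Pr μ ω' * ((δ/2) * (m - N ω'))
          = (δ/2) * m * WSP.Pr μ ω' - (δ/2) * (WSP.Pr μ ω' * N ω') := by
        intro ω'; ring
      rw [Finset.sum_congr rfl (fun ω' _ => e ω'), Finset.sum_sub_distrib,
        ← Finset.mul_sum, ← Finset.mul_sum, WSP.Pr_total μ hμ1, ← hENdef]
      ring
    calc (δ/2) * (m - EN) = ∑ ω' : Fin (r+1) → α, WSP.Pr μ ω' * ((δ/2) * (m - N ω')) :=
          hsumeq.symm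
      _ ≤ _ := Finset.sum_le_sum (fun ω' _ => hptw ω')
  -- combine : m - EN ≤ 2m/7
  have hKEY1 : ((r:ℝ)+2) * ((δ/2) * (m - EN)) ≤ d * m := by
    calc ((r:ℝ)+2) * ((δ/2) * (m - EN))
        ≤ ((r:ℝ)+2) * ∑ ω : Fin (r+2) → α, WSP.Pr μ ω * gain 0 ω := by
          apply mul_le_mul_of_nonneg_left hlow
          positivity
      _ = ∑ ω : Fin (r+2) → α, WSP.Pr μ ω * (∑ j, gain j ω) := hcollapse.symm
      _ ≤ d * m := hEup
  have hENlow : m - EN ≤ 2 * m / 7 := by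
    rcases le_or_gt (m - EN) 0 with h | h
    · have : (0:ℝ) ≤ 2 * m / 7 := by positivity
      linarith
    · have hδn2 : 7 * (d:ℝ) ≤ δ * ((r:ℝ)+2) := by rw [hrn]; exact hδn
      have hdpos : (0:ℝ) < d := by linarith
      nlinarith
  -- deep sets bound
  set deep : (Fin (r+1) → α) → ℝ := fun ω' =>
    ∑ S ∈ Fam, (if K < ((S ∩ (Finset.univ.image ω')).card : ℝ) then (1:ℝ) else 0) with hdeepdef
  have hrk : (r:ℝ) + 1 ≤ 8 * d / δ := by linarith [hrn, hnle]
  have hdeepE : ∑ ω' : Fin (r+1) → α, WSP.Pr μ ω' * deep ω' ≤ m / 6 := by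
    have e1 : ∑ ω' : Fin (r+1) → α, WSP.Pr μ ω' * deep ω'
        = ∑ S ∈ Fam, ∑ ω' : Fin (r+1) → α, WSP.Pr μ ω'
            * (if K < ((S ∩ (Finset.univ.image ω')).card : ℝ) then (1:ℝ) else 0) := by
      rw [← Finset.sum_comm]
      apply Finset.sum_congr rfl
      intro ω' _
      simp only [hdeepdef]
      rw [Finset.mul_sum]
    rw [e1]
    have hSbound : ∀ S ∈ Fam, ∑ ω' : Fin (r+1) → α, WSP.Pr μ ω'
        * (if K < ((S ∩ (Finset.univ.image ω')).card : ℝ) then (1:ℝ) else 0)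
        ≤ ((r:ℝ)+1) * k / K := by
      intro S hSF
      have hptw : ∀ ω' : Fin (r+1) → α, WSP.Pr μ ω'
          * (if K < ((S ∩ (Finset.univ.image ω')).card : ℝ) then (1:ℝ) else 0)
          ≤ WSP.Pr μ ω' * ((∑ i : Fin (r+1), (if ω' i ∈ S then (1:ℝ) else 0)) / K) := by
        intro ω'
        apply mul_le_mul_of_nonneg_left _ (WSP.Pr_nonneg μ hμ0 ω')
        have hcard : ((S ∩ (Finset.univ.image ω')).card : ℝ)
            ≤ ∑ i : Fin (r+1), (if ω' i ∈ S then (1:ℝ) else 0) := by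
          have hsub : S ∩ (Finset.univ.image ω')
              ⊆ (Finset.univ.filter (fun i => ω' i ∈ S)).image ω' := by
            intro z hz
            rcases Finset.mem_inter.mp hz with ⟨hz1, hz2⟩
            rcases Finset.mem_image.mp hz2 with ⟨i, _, rfl⟩
            exact Finset.mem_image_of_mem _ (Finset.mem_filter.mpr ⟨Finset.mem_univ i, hz1⟩)
          have h1 := Finset.card_le_card hsub
          have h2 := Finset.card_image_le
            (s := Finset.univ.filter (fun i => ω' i ∈ S)) (f := ω')
          have h3 : (((Finset.univ.filter (fun i => ω' i ∈ S)).card : ℕ) : ℝ)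
              = ∑ i : Fin (r+1), (if ω' i ∈ S then (1:ℝ) else 0) := by
            rw [Finset.card_filter]
            push_cast
            rfl
          rw [← h3]
          exact_mod_cast le_trans h1 h2
        have hsnn : (0:ℝ) ≤ ∑ i : Fin (r+1), (if ω' i ∈ S then (1:ℝ) else 0) := by
          apply Finset.sum_nonneg
          intro i _
          split_ifs <;> norm_num
        split_ifs with h
        · rw [le_div_iff₀ hK0, one_mul]
          linarith
        · exact div_nonneg hsnn hK0.le
      have hstep : ∑ ω' : Fin (r+1) → α, WSP.Pr μ ω'
          * ((∑ i : Fin (r+1), (if ω' i ∈ S then (1:ℝ) else 0)) / K)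
          = (∑ i : Fin (r+1), ∑ ω' : Fin (r+1) → α, WSP.Pr μ ω'
              * (if ω' i ∈ S then (1:ℝ) else 0)) / K := by
        have e : ∀ ω' : Fin (r+1) → α, WSP.Pr μ ω'
            * ((∑ i : Fin (r+1), (if ω' i ∈ S then (1:ℝ) else 0)) / K)
            = (∑ i : Fin (r+1), WSP.Pr μ ω' * (if ω' i ∈ S then (1:ℝ) else 0)) / K := by
          intro ω'
          rw [← Finset.mul_sum]
          ring
        rw [Finset.sum_congr rfl (fun ω' _ => e ω'), ← Finset.sum_div, Finset.sum_comm]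
      have hci : ∀ i : Fin (r+1), ∑ ω' : Fin (r+1) → α, WSP.Pr μ ω'
          * (if ω' i ∈ S then (1:ℝ) else 0) ≤ k := by
        intro i
        have h := WSP.sum_coord μ hμ1 i (fun x => if x ∈ S then (1:ℝ) else 0)
        have hμS : ∑ x, μ x * (if x ∈ S then (1:ℝ) else 0) = ∑ x ∈ S, μ x := by
          have e2 : ∀ x, μ x * (if x ∈ S then (1:ℝ) else 0) = if x ∈ S then μ x else 0 := by
            intro x
            rw [mul_ite, mul_one, mul_zero]
          rw [Finset.sum_congr rfl (fun x _ => e2 x), Finset.sum_ite_mem, Finset.univ_inter]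
        rw [h, hμS]
        exact hlight S hSF
      calc ∑ ω' : Fin (r+1) → α, WSP.Pr μ ω'
            * (if K < ((S ∩ (Finset.univ.image ω')).card : ℝ) then (1:ℝ) else 0)
          ≤ ∑ ω' : Fin (r+1) → α, WSP.Pr μ ω'
            * ((∑ i : Fin (r+1), (if ω' i ∈ S then (1:ℝ) else 0)) / K) :=
            Finset.sum_le_sum (fun ω' _ => hptw ω')
        _ = (∑ i : Fin (r+1), ∑ ω' : Fin (r+1) → α, WSP.Pr μ ω'
              * (if ω' i ∈ S then (1:ℝ) else 0)) / K := hstep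
        _ ≤ (∑ _i : Fin (r+1), k) / K := by
            apply (div_le_div_iff_of_pos_right hK0).mpr
            exact Finset.sum_le_sum (fun i _ => hci i)
        _ = ((r:ℝ)+1) * k / K := by
            rw [Finset.sum_const, Finset.card_univ, Fintype.card_fin, nsmul_eq_mul]
            push_cast
            ring
    calc ∑ S ∈ Fam, ∑ ω' : Fin (r+1) → α, WSP.Pr μ ω'
          * (if K < ((S ∩ (Finset.univ.image ω')).card : ℝ) then (1:ℝ) else 0)
        ≤ ∑ _S ∈ Fam, ((r:ℝ)+1) * k / K := Finset.sum_le_sum hSbound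
      _ = m * (((r:ℝ)+1) * k / K) := by
          rw [Finset.sum_const, nsmul_eq_mul, hmdef]
      _ ≤ m / 6 := by
          have h6 : ((r:ℝ)+1) * k / K ≤ 1/6 := by
            rw [div_le_div_iff₀ hK0 (by norm_num : (0:ℝ) < 6), one_mul, hKdef]
            have h61 : ((r:ℝ)+1) * (6*k) ≤ (8*(d:ℝ)/δ) * (6*k) :=
              mul_le_mul_of_nonneg_right hrk (by positivity)
            calc ((r:ℝ)+1) * k * 6 = ((r:ℝ)+1) * (6*k) := by ring
              _ ≤ (8*(d:ℝ)/δ) * (6*k) := h61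
              _ = 48*(d:ℝ)*k/δ := by ring
          calc m * (((r:ℝ)+1) * k / K) ≤ m * (1/6) := mul_le_mul_of_nonneg_left h6 hm0
            _ = m / 6 := by ring
  -- shallow cells vs all cells
  set Φ : ℝ := φ (8 * d / δ) K with hΦdef
  have hshal : ∀ ω' : Fin (r+1) → α, N ω' ≤ Φ + deep ω' := by
    intro ω'
    have hsplit : N ω' = ((((Fam.image (fun S => S ∩ (Finset.univ.image ω'))).filter
          (fun C => (C.card:ℝ) ≤ K)).card : ℝ))
        + ((((Fam.image (fun S => S ∩ (Finset.univ.image ω'))).filter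
          (fun C => ¬ ((C.card:ℝ) ≤ K))).card : ℝ)) := by
      simp only [hNdef]
      exact_mod_cast (Finset.card_filter_add_card_filter_not
        (s := Fam.image (fun S => S ∩ (Finset.univ.image ω')))
        (p := fun C => ((C.card:ℝ) ≤ K))).symm
    have h1 : ((((Fam.image (fun S => S ∩ (Finset.univ.image ω'))).filter
          (fun C => (C.card:ℝ) ≤ K)).card : ℝ)) ≤ Φ := by
      calc ((((Fam.image (fun S => S ∩ (Finset.univ.image ω'))).filter
            (fun C => (C.card:ℝ) ≤ K)).card : ℝ))
          ≤ φ (((Finset.univ.image ω').card : ℝ)) K := hφ (Finset.univ.image ω') K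
        _ ≤ Φ := by
            apply hφmono _ _ _ _ _ le_rfl
            have hc1 : (Finset.univ.image ω').card ≤ r + 1 := by
              calc (Finset.univ.image ω').card ≤ (Finset.univ : Finset (Fin (r+1))).card :=
                    Finset.card_image_le
                _ = r + 1 := by rw [Finset.card_univ, Fintype.card_fin]
            have hc2 : ((Finset.univ.image ω').card : ℝ) ≤ (r:ℝ) + 1 := by exact_mod_cast hc1
            linarith
    have h2 : ((((Fam.image (fun S => S ∩ (Finset.univ.image ω'))).filter
          (fun C => ¬ ((C.card:ℝ) ≤ K))).card : ℝ)) ≤ deep ω' := by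
      rw [Finset.filter_image]
      have hc0 : Fam.filter (fun S => ¬ (((S ∩ (Finset.univ.image ω')).card:ℝ) ≤ K))
          = Fam.filter (fun S => K < ((S ∩ (Finset.univ.image ω')).card:ℝ)) := by
        apply Finset.filter_congr
        intro S _
        exact not_le
      have hc2 : (((Fam.filter (fun S => K < ((S ∩ (Finset.univ.image ω')).card:ℝ))).card : ℕ) : ℝ)
          = deep ω' := by
        simp only [hdeepdef]
        rw [Finset.card_filter]
        push_cast
        rfl
      calc (((Fam.filter (fun S => ¬ (((S ∩ (Finset.univ.image ω')).card:ℝ) ≤ K))).image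
              (fun S => S ∩ (Finset.univ.image ω'))).card : ℝ)
          ≤ ((Fam.filter (fun S => ¬ (((S ∩ (Finset.univ.image ω')).card:ℝ) ≤ K))).card : ℝ) := by
            exact_mod_cast Finset.card_image_le
        _ = deep ω' := by rw [hc0, hc2]
    linarith
  have hENup : EN ≤ Φ + m / 6 := by
    have hΦnn : ∀ ω' : Fin (r+1) → α, WSP.Pr μ ω' * N ω' ≤ WSP.Pr μ ω' * (Φ + deep ω') :=
      fun ω' => mul_le_mul_of_nonneg_left (hshal ω') (WSP.Pr_nonneg μ hμ0 ω')
    have e : ∑ ω' : Fin (r+1) → α, WSP.Pr μ ω' * (Φ + deep ω')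
        = Φ + ∑ ω' : Fin (r+1) → α, WSP.Pr μ ω' * deep ω' := by
      have e2 : ∀ ω' : Fin (r+1) → α, WSP.Pr μ ω' * (Φ + deep ω')
          = Φ * WSP.Pr μ ω' + WSP.Pr μ ω' * deep ω' := by
        intro ω'; ring
      rw [Finset.sum_congr rfl (fun ω' _ => e2 ω'), Finset.sum_add_distrib, ← Finset.mul_sum,
        WSP.Pr_total μ hμ1, mul_one]
    calc EN ≤ ∑ ω' : Fin (r+1) → α, WSP.Pr μ ω' * (Φ + deep ω') :=
          Finset.sum_le_sum (fun ω' _ => hΦnn ω')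
      _ = Φ + ∑ ω' : Fin (r+1) → α, WSP.Pr μ ω' * deep ω' := e
      _ ≤ Φ + m / 6 := by linarith [hdeepE]
  -- final numerics
  have hΦlow : 23 * m / 42 ≤ Φ := by linarith [hENlow, hENup]
  have hΦ0 : (0:ℝ) ≤ Φ := by linarith [hΦlow, hm0]
  have h24 : (24:ℝ) ≤ 24 * d / δ := by
    rw [le_div_iff₀ hδ0]
    nlinarith
  have hfac : (0:ℝ) ≤ 24 * d / δ - 24 := by linarith
  nlinarith [mul_nonneg hfac hΦ0, hΦlow, hΦ0, hm0]
end

section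
/- Weighted Packing Lemma: Let (X, 𝒫) be a finite set system with n sets and VC-dimension at most d (d ≥ 1 an integer), equipped with a probability weight μ on X, and suppose μ(Δ(Sᵢ,Sⱼ)) ≥ δ for all distinct sets Sᵢ, Sⱼ ∈ 𝒫, where δ ∈ (0,1). Let Y be the set of distinct values in an iid sample of size s = ⌈8d/δ⌉ − 1 drawn from μ with replacement. Then n ≤ 2·E[|𝒫|_Y|], where 𝒫|_Y = {S ∩ Y : S ∈ 𝒫}. -/
/-!
Fix a sample `Y` and split `𝒫` into classes of sets with the same trace on `Y`. In a class of
`k` sets, `δ`-separation gives `δ k (k - 1) ≤ ∑_{S ≠ R} μ(S Δ R) = 2 ∑_x μ(x) a_x b_x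
≤ 2 k ∑_x μ(x) min(a_x, b_x)`, where `a_x`, `b_x` count the sets of the class containing and
missing `x`; summing over classes, `δ (n - |𝒫|_Y|) ≤ 2 ∑_x μ(x) m_Y(x)` with `m_Y(x)` the total
minority count. For a sample `z` of size `s + 1`, the quantities `m_{z - z_i}(z_i)` are weights on
edges of the one-inclusion graph of the traces of `𝒫` on `z`, so Haussler's bound
`|E| ≤ VC-dim · |V|` gives `∑_i m_{z - z_i}(z_i) ≤ d n`. By exchangeability of the sample,
`E ∑_x μ(x) m_Y(x) ≤ d n / (s + 1) ≤ δ n / 8`, hence `n - E |𝒫|_Y| ≤ n / 4`.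
-/

open Finset

namespace Finset

variable {α : Type*} [DecidableEq α]

/-- The edges of the one-inclusion graph of `F`, the edge between `B` and `B \ {x}` being
recorded as `⟨B, x⟩`. -/
def downEdges (F : Finset (Finset α)) : Finset ((_ : Finset α) × α) :=
  F.sigma fun B => {x ∈ B | B.erase x ∈ F}

variable {F G : Finset (Finset α)} {Y : Finset α} {a x : α} {μ : α → ℝ} {δ : ℝ}

@[simp]
lemma mem_downEdges {e : (_ : Finset α) × α} :
    e ∈ downEdges F ↔ e.1 ∈ F ∧ e.2 ∈ e.1 ∧ e.1.erase e.2 ∈ F := by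
  simp [downEdges]

lemma downEdges_mono (h : F ⊆ G) : downEdges F ⊆ downEdges G := fun e he => by
  simp only [mem_downEdges] at he ⊢
  exact ⟨h he.1, he.2.1, h he.2.2⟩

lemma downEdges_inter : downEdges (F ∩ G) = downEdges F ∩ downEdges G := by
  ext e
  simp only [mem_downEdges, mem_inter]
  tauto

lemma card_downEdges_le_subfamilies (a : α) :
    #(downEdges F) ≤ #(downEdges (F.nonMemberSubfamily a)) + #(downEdges (F.memberSubfamily a))
      + #(F.memberSubfamily a ∩ F.nonMemberSubfamily a) := by
  have hcover : downEdges F ⊆ downEdges (F.nonMemberSubfamily a)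
      ∪ (downEdges (F.memberSubfamily a)).image (fun e => ⟨insert a e.1, e.2⟩)
      ∪ (F.memberSubfamily a ∩ F.nonMemberSubfamily a).image (fun C => ⟨insert a C, a⟩) := by
    rintro ⟨B, x⟩ he
    simp only [mem_downEdges] at he
    obtain ⟨hB, hxB, hBx⟩ := he
    simp only [mem_union, mem_downEdges, mem_nonMemberSubfamily, mem_image, mem_inter,
      mem_memberSubfamily, Sigma.mk.injEq]
    by_cases haB : a ∈ B
    · by_cases hxa : x = a
      · subst hxa
        refine Or.inr ⟨B.erase x, ⟨⟨by rwa [insert_erase haB], notMem_erase _ _⟩, hBx,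
          notMem_erase _ _⟩, insert_erase haB, HEq.rfl⟩
      · refine Or.inl (Or.inr ⟨⟨B.erase a, x⟩, ⟨⟨by rwa [insert_erase haB], notMem_erase _ _⟩,
          mem_erase.2 ⟨hxa, hxB⟩, ?_, ?_⟩, insert_erase haB, HEq.rfl⟩)
        · rwa [erase_right_comm, insert_erase (mem_erase.2 ⟨Ne.symm hxa, haB⟩)]
        · exact fun h => notMem_erase a B (mem_of_mem_erase h)
    · exact Or.inl (Or.inl ⟨⟨hB, haB⟩, hxB, hBx, fun h => haB (mem_of_mem_erase h)⟩)
  calc #(downEdges F) ≤ _ := card_le_card hcover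
    _ ≤ _ := card_union_le _ _
    _ ≤ _ := add_le_add (card_union_le _ _) card_image_le
    _ ≤ _ := Nat.add_le_add_right (Nat.add_le_add_left card_image_le _) _

lemma vcDim_le_vcDim_of_shatters (h : ∀ s, G.Shatters s → F.Shatters s) : G.vcDim ≤ F.vcDim :=
  sup_mono fun s hs => mem_shatterer.2 (h s (mem_shatterer.1 hs))

lemma Shatters.of_image_erase {s : Finset α} (h : (F.image (erase · a)).Shatters s) :
    F.Shatters s := by
  obtain ⟨_, hv, hsv⟩ := h.exists_superset
  obtain ⟨v, -, rfl⟩ := mem_image.1 hv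
  have has : a ∉ s := fun ha => notMem_erase a v (hsv ha)
  intro t ht
  obtain ⟨_, hu', rfl⟩ := h ht
  obtain ⟨u, hu, rfl⟩ := mem_image.1 hu'
  exact ⟨u, hu, by rw [inter_erase, erase_eq_of_notMem fun h => has (mem_of_mem_inter_left h)]⟩

lemma Shatters.insert_of_memberSubfamily_inter {s : Finset α}
    (h : (F.memberSubfamily a ∩ F.nonMemberSubfamily a).Shatters s) : F.Shatters (insert a s) := by
  intro t ht
  rw [subset_insert_iff] at ht
  by_cases ha : a ∈ t
  · obtain ⟨u, hu, hsu⟩ := h ht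
    rw [mem_inter, mem_memberSubfamily] at hu
    refine ⟨insert a u, hu.1.1, ?_⟩
    rw [← insert_inter_distrib, hsu, insert_erase ha]
  · obtain ⟨u, hu, hsu⟩ := h ht
    rw [mem_inter, mem_nonMemberSubfamily] at hu
    refine ⟨u, hu.2.1, ?_⟩
    rwa [insert_inter_of_notMem hu.2.2, hsu, erase_eq_self]

lemma vcDim_memberSubfamily_union_le (a : α) :
    (F.memberSubfamily a ∪ F.nonMemberSubfamily a).vcDim ≤ F.vcDim := by
  rw [memberSubfamily_union_nonMemberSubfamily]
  exact vcDim_le_vcDim_of_shatters fun _ => Shatters.of_image_erase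

lemma vcDim_memberSubfamily_inter_lt (h : (F.memberSubfamily a ∩ F.nonMemberSubfamily a).Nonempty) :
    (F.memberSubfamily a ∩ F.nonMemberSubfamily a).vcDim < F.vcDim := by
  obtain ⟨s, hs, hsup⟩ := exists_mem_eq_sup _ ⟨∅, mem_shatterer.2 (shatters_empty.2 h)⟩ card
  rw [mem_shatterer] at hs
  have has : a ∉ s := by
    obtain ⟨u, hu, hsu⟩ := hs.exists_superset
    exact fun ha => (mem_nonMemberSubfamily.1 (mem_inter.1 hu).2).2 (hsu ha)
  calc _ = #s := hsup
    _ < #(insert a s) := by rw [card_insert_of_notMem has]; exact Nat.lt_succ_self _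
    _ ≤ F.vcDim := hs.insert_of_memberSubfamily_inter.card_le_vcDim

theorem card_downEdges_le (F : Finset (Finset α)) : #(downEdges F) ≤ F.vcDim * #F := by
  obtain ⟨U, hU⟩ : ∃ U : Finset α, ∀ B ∈ F, B ⊆ U := ⟨F.sup id, fun B => le_sup (f := id)⟩
  induction U using Finset.induction_on generalizing F with
  | empty =>
    have : downEdges F = ∅ := eq_empty_of_forall_notMem fun e he =>
      notMem_empty _ (hU _ (mem_downEdges.1 he).1 (mem_downEdges.1 he).2.1)
    simp [this]
  | insert a U ha ih =>
    set M := F.memberSubfamily a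
    set N := F.nonMemberSubfamily a
    have hMN : ∀ B ∈ M ∪ N, B ⊆ U := by
      intro B hB
      rcases mem_union.1 hB with hB | hB
      · rw [mem_memberSubfamily] at hB
        exact (insert_subset_insert_iff hB.2).1 (hU _ hB.1)
      · rw [mem_nonMemberSubfamily] at hB
        exact (subset_insert_iff_of_notMem hB.2).1 (hU _ hB.1)
    have hcard : #F = #(M ∪ N) + #(M ∩ N) := by
      rw [card_union_add_card_inter, card_memberSubfamily_add_card_nonMemberSubfamily]
    have ih_union := ih (M ∪ N) hMN
    have ih_inter := ih (M ∩ N) fun B hB => hMN B (mem_union_left _ (mem_inter.1 hB).1)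
    have hsub : #(downEdges N) + #(downEdges M) ≤
        #(downEdges (M ∪ N)) + #(downEdges (M ∩ N)) := by
      rw [add_comm, downEdges_inter, ← card_union_add_card_inter]
      exact Nat.add_le_add_right (card_le_card (union_subset (downEdges_mono subset_union_left)
        (downEdges_mono subset_union_right))) _
    have hdim_union := Nat.mul_le_mul_right #(M ∪ N) (vcDim_memberSubfamily_union_le (F := F) a)
    have hdim_inter : (M ∩ N).vcDim * #(M ∩ N) + #(M ∩ N) ≤ F.vcDim * #(M ∩ N) := by
      rcases (M ∩ N).eq_empty_or_nonempty with h | h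
      · simp [h]
      · rw [← Nat.succ_mul]
        exact Nat.mul_le_mul_right _ (vcDim_memberSubfamily_inter_lt h)
    have := card_downEdges_le_subfamilies (F := F) a
    rw [hcard]
    linarith

lemma downEdges_filter (p : Finset α → Prop) [DecidablePred p] :
    downEdges {B ∈ F | p B} = {e ∈ downEdges F | p e.1 ∧ p (e.1.erase e.2)} := by
  ext e
  simp only [mem_downEdges, mem_filter]
  tauto

theorem sum_downEdges_min_le (F : Finset (Finset α)) (w : Finset α → ℕ) :
    ∑ e ∈ downEdges F, min (w e.1) (w (e.1.erase e.2)) ≤ F.vcDim * ∑ B ∈ F, w B := by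
  set N := F.sup w
  have layer : ∀ m ≤ N, m = ∑ t ∈ range N, if t < m then 1 else 0 := fun m hm => by
    have hrange : {t ∈ range N | t < m} = range m := by
      ext t
      simp only [mem_filter, mem_range]
      omega
    rw [sum_boole, Nat.cast_id, hrange, card_range]
  calc ∑ e ∈ downEdges F, min (w e.1) (w (e.1.erase e.2))
      = ∑ t ∈ range N, #(downEdges {B ∈ F | t < w B}) := by
        simp_rw [downEdges_filter, card_filter]
        rw [sum_comm]
        refine sum_congr rfl fun e he => ?_
        rw [layer _ (min_le_left _ _ |>.trans (le_sup (mem_downEdges.1 he).1))]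
        simp only [lt_min_iff]
    _ ≤ ∑ t ∈ range N, F.vcDim * #{B ∈ F | t < w B} := sum_le_sum fun t _ =>
        (card_downEdges_le _).trans (Nat.mul_le_mul_right _ (vcDim_mono (filter_subset _ _)))
    _ = F.vcDim * ∑ B ∈ F, w B := by
        rw [← mul_sum]
        congr 1
        simp_rw [card_filter]
        rw [sum_comm]
        exact sum_congr rfl fun B hB => (layer (w B) (le_sup hB)).symm

def minorityCount (c : Finset (Finset α)) (x : α) : ℕ := min #{S ∈ c | x ∈ S} #{S ∈ c | x ∉ S}

def traceSplit (F : Finset (Finset α)) (Y : Finset α) (x : α) : ℕ :=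
  ∑ A ∈ F.image (· ∩ Y), minorityCount {S ∈ F | S ∩ Y = A} x

lemma traceSplit_eq_zero_of_mem (hx : x ∈ Y) : traceSplit F Y x = 0 := by
  refine sum_eq_zero fun A _ => Nat.min_eq_zero_iff.2 ?_
  simp only [card_eq_zero, filter_filter, filter_eq_empty_iff]
  by_cases hxA : x ∈ A
  · exact Or.inr fun S _ h => h.2 (mem_of_mem_inter_left (h.1 ▸ hxA : x ∈ S ∩ Y))
  · exact Or.inl fun S _ h => hxA (h.1 ▸ mem_inter.2 ⟨h.2, hx⟩)

lemma inter_insert_eq_insert_iff {S A : Finset α} (hxY : x ∉ Y) (hxA : x ∉ A) :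
    S ∩ insert x Y = insert x A ↔ S ∩ Y = A ∧ x ∈ S := by
  constructor
  · intro h
    refine ⟨?_, (mem_inter.1 (h ▸ mem_insert_self x A)).1⟩
    rw [← erase_insert hxY, inter_erase, h, erase_insert hxA]
  · rintro ⟨rfl, hxS⟩
    exact inter_insert_of_mem hxS

lemma inter_insert_eq_iff {S A : Finset α} (hxA : x ∉ A) :
    S ∩ insert x Y = A ↔ S ∩ Y = A ∧ x ∉ S := by
  by_cases hxS : x ∈ S
  · simp only [hxS, not_true_eq_false, and_false, iff_false]
    exact fun h => hxA (h ▸ mem_inter.2 ⟨hxS, mem_insert_self x Y⟩)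
  · simp [inter_insert_of_notMem hxS, hxS]

lemma traceSplit_eq_sum_min (hx : x ∉ Y) :
    traceSplit F Y x = ∑ A ∈ F.image (· ∩ Y),
      min #{S ∈ F | S ∩ insert x Y = insert x A} #{S ∈ F | S ∩ insert x Y = A} := by
  refine sum_congr rfl fun A hA => ?_
  obtain ⟨T, -, rfl⟩ := mem_image.1 hA
  have hxA : x ∉ T ∩ Y := fun h => hx (mem_of_mem_inter_right h)
  simp only [minorityCount, filter_filter]
  congr 2 <;> refine filter_congr fun S _ => ?_
  · exact (inter_insert_eq_insert_iff hx hxA).symm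
  · exact (inter_insert_eq_iff hxA).symm

lemma Shatters.of_image_inter {s : Finset α} (h : (F.image (· ∩ Y)).Shatters s) :
    F.Shatters s := by
  obtain ⟨_, hv, hsv⟩ := h.exists_superset
  obtain ⟨v, -, rfl⟩ := mem_image.1 hv
  intro t ht
  obtain ⟨_, hu', rfl⟩ := h ht
  obtain ⟨u, hu, rfl⟩ := mem_image.1 hu'
  refine ⟨u, hu, ?_⟩
  rw [inter_comm u, ← inter_assoc, inter_eq_left.2 (hsv.trans inter_subset_right)]

lemma vcDim_image_inter_le (F : Finset (Finset α)) (Y : Finset α) :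
    (F.image (· ∩ Y)).vcDim ≤ F.vcDim :=
  vcDim_le_vcDim_of_shatters fun _ => Shatters.of_image_inter

theorem sum_traceSplit_erase_le (F : Finset (Finset α)) (Z : Finset α) :
    ∑ x ∈ Z, traceSplit F (Z.erase x) x ≤ F.vcDim * #F := by
  set w : Finset α → ℕ := fun B => #{S ∈ F | S ∩ Z = B}
  set g : (_ : Finset α) × α → ℕ := fun e => min (w e.1) (w (e.1.erase e.2))
  set P := Z.sigma fun x => F.image (· ∩ Z.erase x)
  have hP : ∀ p ∈ P, p.1 ∉ p.2 := by
    intro p hp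
    obtain ⟨-, hp⟩ := mem_sigma.1 hp
    obtain ⟨S, -, hS⟩ := mem_image.1 hp
    exact hS ▸ fun h => notMem_erase _ _ (mem_of_mem_inter_right h)
  have hw : ∀ B, w B ≠ 0 → B ∈ F.image (· ∩ Z) := fun B hB => by
    obtain ⟨S, hS⟩ := card_ne_zero.1 hB
    exact mem_image.2 ⟨S, (mem_filter.1 hS).1, (mem_filter.1 hS).2⟩
  -- the term `(x, A)` is the weight of the edge between `A ∪ {x}` and `A` among the traces on `Z`
  calc ∑ x ∈ Z, traceSplit F (Z.erase x) x
      = ∑ p ∈ P, g ⟨insert p.1 p.2, p.1⟩ := by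
        rw [sum_sigma]
        refine sum_congr rfl fun x hx => ?_
        rw [traceSplit_eq_sum_min (notMem_erase x Z), insert_erase hx]
        refine sum_congr rfl fun A hA => ?_
        simp only [g, erase_insert (hP ⟨x, A⟩ (mem_sigma.2 ⟨hx, hA⟩))]
        rfl
    _ = ∑ e ∈ P.image fun p => ⟨insert p.1 p.2, p.1⟩, g e := by
        refine (sum_image fun p hp q hq hpq => ?_).symm
        simp only [Sigma.mk.injEq, heq_eq_eq] at hpq
        refine Sigma.ext hpq.2 (heq_of_eq ?_)
        rw [← erase_insert (hP p hp), ← erase_insert (hP q hq), hpq.1, hpq.2]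
    _ ≤ ∑ e ∈ downEdges (F.image (· ∩ Z)), g e := sum_le_sum_of_ne_zero fun e he hne => by
        obtain ⟨p, -, rfl⟩ := mem_image.1 he
        simp only [g, ne_eq, Nat.min_eq_zero_iff, not_or] at hne
        exact mem_downEdges.2 ⟨hw _ hne.1, mem_insert_self _ _, hw _ hne.2⟩
    _ ≤ (F.image (· ∩ Z)).vcDim * ∑ B ∈ F.image (· ∩ Z), w B := sum_downEdges_min_le _ w
    _ ≤ F.vcDim * #F := by
        rw [← card_eq_sum_card_image]
        exact Nat.mul_le_mul_right _ (vcDim_image_inter_le F Z)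

def IsSeparated (μ : α → ℝ) (δ : ℝ) (F : Finset (Finset α)) : Prop :=
  ∀ S ∈ F, ∀ R ∈ F, S ≠ R → δ ≤ ∑ x ∈ S \ R ∪ R \ S, μ x

lemma IsSeparated.mono (h : G ⊆ F) (hF : IsSeparated μ δ F) : IsSeparated μ δ G :=
  fun S hS R hR => hF S (h hS) R (h hR)

lemma sum_sum_sum_sdiff [Fintype α] (μ : α → ℝ) (c : Finset (Finset α)) :
    ∑ S ∈ c, ∑ R ∈ c, ∑ x ∈ S \ R, μ x =
      ∑ x, μ x * (#{S ∈ c | x ∈ S} * #{S ∈ c | x ∉ S} : ℕ) := by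
  have h : ∀ x, μ x * (#{S ∈ c | x ∈ S} * #{S ∈ c | x ∉ S} : ℕ) =
      ∑ S ∈ c, ∑ R ∈ c, if x ∈ S \ R then μ x else 0 := by
    intro x
    rw [Nat.cast_mul, card_filter, card_filter, Nat.cast_sum, Nat.cast_sum, sum_mul_sum, mul_sum]
    refine sum_congr rfl fun S _ => ?_
    rw [mul_sum]
    refine sum_congr rfl fun R _ => ?_
    by_cases hS : x ∈ S <;> by_cases hR : x ∈ R <;> simp [hS, hR]
  simp_rw [h]
  conv_rhs => rw [sum_comm]
  refine sum_congr rfl fun S _ => ?_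
  conv_rhs => rw [sum_comm]
  refine sum_congr rfl fun R _ => ?_
  rw [sum_ite_mem, univ_inter]

lemma mul_le_add_mul_min (a b : ℕ) : a * b ≤ (a + b) * min a b := by
  rcases le_total a b with h | h
  · rw [min_eq_left h, mul_comm]
    exact Nat.mul_le_mul_right _ (Nat.le_add_left b a)
  · rw [min_eq_right h]
    exact Nat.mul_le_mul_right _ (Nat.le_add_right a b)

theorem mul_card_le_add_sum_minorityCount [Fintype α] {c : Finset (Finset α)}
    (hμ : ∀ x, 0 ≤ μ x) (hc : IsSeparated μ δ c) (hne : c.Nonempty) :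
    δ * #c ≤ δ + 2 * ∑ x, μ x * minorityCount c x := by
  set M := ∑ x, μ x * (minorityCount c x : ℝ)
  have hk : (0 : ℝ) < #c := by exact_mod_cast hne.card_pos
  have hpair : ∀ S ∈ c, ∀ R ∈ c,
      δ ≤ ∑ x ∈ S \ R, μ x + ∑ x ∈ R \ S, μ x + if S = R then δ else 0 := by
    intro S hS R hR
    by_cases hSR : S = R
    · subst hSR
      simp
    · simp only [hSR, if_false, add_zero]
      rw [← sum_union disjoint_sdiff_sdiff]
      exact hc S hS R hR hSR
  have hmin : ∑ x, μ x * (#{S ∈ c | x ∈ S} * #{S ∈ c | x ∉ S} : ℕ) ≤ #c * M := by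
    rw [mul_sum]
    refine sum_le_sum fun x _ => ?_
    rw [mul_left_comm]
    refine mul_le_mul_of_nonneg_left ?_ (hμ x)
    have := mul_le_add_mul_min #{S ∈ c | x ∈ S} #{S ∈ c | x ∉ S}
    rw [card_filter_add_card_filter_not] at this
    exact_mod_cast this
  have hsq : δ * (#c * #c) ≤ 2 * (#c * M) + δ * #c := by
    calc δ * (#c * #c) = ∑ S ∈ c, ∑ R ∈ c, δ := by simp only [sum_const, nsmul_eq_mul]; ring
      _ ≤ ∑ S ∈ c, ∑ R ∈ c, (∑ x ∈ S \ R, μ x + ∑ x ∈ R \ S, μ x + if S = R then δ else 0) :=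
        sum_le_sum fun S hS => sum_le_sum fun R hR => hpair S hS R hR
      _ = 2 * ∑ S ∈ c, ∑ R ∈ c, ∑ x ∈ S \ R, μ x + δ * #c := by
        simp only [sum_add_distrib, sum_ite_eq]
        rw [sum_comm (f := fun S R => ∑ x ∈ R \ S, μ x), sum_ite_mem, inter_self, sum_const,
          nsmul_eq_mul]
        ring
      _ ≤ 2 * (#c * M) + δ * #c := by rw [sum_sum_sum_sdiff]; linarith
  nlinarith

theorem sum_traceSplit_image_erase_le {ι : Type*} [Fintype ι] [DecidableEq ι]
    (F : Finset (Finset α)) (z : ι → α) :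
    ∑ i, traceSplit F ((univ.erase i).image z) (z i) ≤ F.vcDim * #F := by
  set I : Finset ι := {i | z i ∉ (univ.erase i).image z}
  have hI : ∀ i ∈ I, (univ.erase i).image z = (univ.image z).erase (z i) := by
    intro i hi
    simp only [I, mem_filter, mem_univ, true_and, mem_image, mem_erase, and_true] at hi
    ext y
    simp only [mem_image, mem_erase, mem_univ, and_true, true_and]
    constructor
    · rintro ⟨j, hji, rfl⟩
      exact ⟨fun h => hi ⟨j, hji, h⟩, j, rfl⟩
    · rintro ⟨hy, j, rfl⟩
      exact ⟨j, fun h => hy (h ▸ rfl), rfl⟩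
  have hinj : Set.InjOn z I := fun i hi j _ hij => by
    by_contra h
    exact (mem_filter.1 hi).2 (mem_image.2 ⟨j, mem_erase.2 ⟨Ne.symm h, mem_univ j⟩, hij.symm⟩)
  calc ∑ i, traceSplit F ((univ.erase i).image z) (z i)
      = ∑ i ∈ I, traceSplit F ((univ.image z).erase (z i)) (z i) := by
        rw [← sum_filter_of_ne (p := fun i => z i ∉ (univ.erase i).image z)
          fun i _ h hz => h (traceSplit_eq_zero_of_mem hz)]
        exact sum_congr rfl fun i hi => by rw [hI i hi]
    _ = ∑ x ∈ I.image z, traceSplit F ((univ.image z).erase x) x :=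
        (sum_image (f := fun x => traceSplit F ((univ.image z).erase x) x) hinj).symm
    _ ≤ ∑ x ∈ univ.image z, traceSplit F ((univ.image z).erase x) x :=
        sum_le_sum_of_subset (image_subset_image (subset_univ I))
    _ ≤ F.vcDim * #F := sum_traceSplit_erase_le F _

theorem mul_card_le_add_sum_traceSplit [Fintype α] (hμ : ∀ x, 0 ≤ μ x)
    (hF : IsSeparated μ δ F) (Y : Finset α) :
    δ * #F ≤ δ * #(F.image (· ∩ Y)) + 2 * ∑ x, μ x * traceSplit F Y x := by
  calc δ * #F = ∑ A ∈ F.image (· ∩ Y), δ * #{S ∈ F | S ∩ Y = A} := by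
        rw [card_eq_sum_card_image (· ∩ Y) F, Nat.cast_sum, mul_sum]
    _ ≤ ∑ A ∈ F.image (· ∩ Y), (δ + 2 * ∑ x, μ x * minorityCount {S ∈ F | S ∩ Y = A} x) := by
        refine sum_le_sum fun A hA => mul_card_le_add_sum_minorityCount hμ
          (hF.mono (filter_subset _ F)) ?_
        obtain ⟨S, hS, rfl⟩ := mem_image.1 hA
        exact ⟨S, mem_filter.2 ⟨hS, rfl⟩⟩
    _ = δ * #(F.image (· ∩ Y)) + 2 * ∑ x, μ x * traceSplit F Y x := by
        simp only [sum_add_distrib, sum_const, nsmul_eq_mul, traceSplit, Nat.cast_sum, mul_sum]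
        rw [sum_comm (t := univ), mul_comm δ]

end Finset

namespace Sampling

variable {α : Type*} [Fintype α] {μ : α → ℝ}

def sampleExpectation (μ : α → ℝ) (s : ℕ) (f : (Fin s → α) → ℝ) : ℝ :=
  ∑ u : Fin s → α, (∏ j, μ (u j)) * f u

lemma sampleExpectation_const (hμ1 : ∑ x, μ x = 1) (s : ℕ) (c : ℝ) :
    sampleExpectation μ s (fun _ => c) = c := by
  rw [sampleExpectation, ← sum_mul, ← Fintype.sum_pow, hμ1, one_pow, one_mul]

lemma sampleExpectation_mono (hμ0 : ∀ x, 0 ≤ μ x) {s : ℕ} {f g : (Fin s → α) → ℝ}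
    (h : ∀ u, f u ≤ g u) : sampleExpectation μ s f ≤ sampleExpectation μ s g :=
  sum_le_sum fun u _ => mul_le_mul_of_nonneg_left (h u) (prod_nonneg fun _ _ => hμ0 _)

lemma sampleExpectation_linear {s : ℕ} (a b : ℝ) (f g : (Fin s → α) → ℝ) :
    sampleExpectation μ s (fun u => a * f u + b * g u) =
      a * sampleExpectation μ s f + b * sampleExpectation μ s g := by
  simp only [sampleExpectation, mul_add, sum_add_distrib, mul_sum, mul_left_comm]

lemma sampleExpectation_removeNth {s : ℕ} (i : Fin (s + 1)) (g : α → (Fin s → α) → ℝ) :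
    sampleExpectation μ (s + 1) (fun z => g (z i) (i.removeNth z)) =
      sampleExpectation μ s (fun u => ∑ x, μ x * g x u) := by
  rw [sampleExpectation, ← (Fin.insertNthEquiv (fun _ => α) i).sum_comp, Fintype.sum_prod_type,
    sum_comm]
  refine sum_congr rfl fun u _ => ?_
  rw [mul_sum]
  refine sum_congr rfl fun x _ => ?_
  simp only [Fin.insertNthEquiv_apply, Fin.prod_univ_succAbove _ i, Fin.insertNth_apply_same,
    Fin.insertNth_apply_succAbove]
  erw [Fin.removeNth_insertNth]
  ring

variable [DecidableEq α] {δ : ℝ}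

theorem succ_mul_sampleExpectation_traceSplit_le (hμ0 : ∀ x, 0 ≤ μ x) (hμ1 : ∑ x, μ x = 1)
    (F : Finset (Finset α)) (s : ℕ) :
    (s + 1) * sampleExpectation μ s (fun u => ∑ x, μ x * traceSplit F (univ.image u) x)
      ≤ F.vcDim * #F := by
  have hshift : ∀ i : Fin (s + 1),
      sampleExpectation μ s (fun u => ∑ x, μ x * traceSplit F (univ.image u) x) =
        sampleExpectation μ (s + 1) (fun z => traceSplit F ((univ.erase i).image z) (z i)) := by
    intro i
    rw [← sampleExpectation_removeNth i fun x u => (traceSplit F (univ.image u) x : ℝ)]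
    congr! 3 with z
    rw [show i.removeNth z = z ∘ i.succAbove from rfl, ← image_image, Fin.image_succAbove_univ,
      compl_singleton]
  calc (s + 1) * sampleExpectation μ s (fun u => ∑ x, μ x * traceSplit F (univ.image u) x)
      = ∑ i : Fin (s + 1),
          sampleExpectation μ s (fun u => ∑ x, μ x * traceSplit F (univ.image u) x) := by
        rw [sum_const, card_univ, Fintype.card_fin, nsmul_eq_mul]
        push_cast
        ring
    _ = sampleExpectation μ (s + 1)
          (fun z => ∑ i, (traceSplit F ((univ.erase i).image z) (z i) : ℝ)) := by
        rw [sum_congr rfl fun i _ => hshift i]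
        simp only [sampleExpectation, mul_sum]
        exact sum_comm
    _ ≤ sampleExpectation μ (s + 1) (fun _ => (F.vcDim * #F : ℝ)) :=
        sampleExpectation_mono hμ0 fun z => by exact_mod_cast sum_traceSplit_image_erase_le F z
    _ = F.vcDim * #F := sampleExpectation_const hμ1 _ _

theorem mul_card_le_sampleExpectation (hμ0 : ∀ x, 0 ≤ μ x) (hμ1 : ∑ x, μ x = 1)
    {F : Finset (Finset α)} (hF : IsSeparated μ δ F) (s : ℕ) :
    δ * #F ≤ δ * sampleExpectation μ s (fun u => #(F.image (· ∩ univ.image u)))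
      + 2 * sampleExpectation μ s (fun u => ∑ x, μ x * traceSplit F (univ.image u) x) := by
  rw [← sampleExpectation_linear, ← sampleExpectation_const hμ1 s (δ * #F)]
  exact sampleExpectation_mono hμ0 fun u => mul_card_le_add_sum_traceSplit hμ0 hF _

end Sampling

open Sampling in
theorem weighted_packing_lemma_general {α : Type*} [Fintype α] [DecidableEq α]
    (μ : α → ℝ) (hμ0 : ∀ x, 0 ≤ μ x) (hμ1 : ∑ x, μ x = 1)
    (Fam : Finset (Finset α)) (d : ℕ)
    (hVC : ∀ S : Finset α, (∀ T ⊆ S, ∃ R ∈ Fam, R ∩ S = T) → S.card ≤ d)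
    (δ : ℝ) (hδ0 : 0 < δ)
    (hsep : ∀ S ∈ Fam, ∀ R ∈ Fam, S ≠ R → δ ≤ ∑ x ∈ (S \ R) ∪ (R \ S), μ x) :
    (Fam.card : ℝ) ≤
      2 * ∑ u : Fin (Nat.ceil (8 * (d : ℝ) / δ) - 1) → α,
        (∏ i, μ (u i)) *
          ((Fam.image (fun S => S ∩ (Finset.univ.image u))).card : ℝ) := by
  set s := ⌈8 * (d : ℝ) / δ⌉₊ - 1
  have hs : 8 * d ≤ δ * (s + 1) := by
    have hceil : (⌈8 * (d : ℝ) / δ⌉₊ : ℝ) ≤ s + 1 := by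
      exact_mod_cast (by omega : ⌈8 * (d : ℝ) / δ⌉₊ ≤ s + 1)
    have := (Nat.le_ceil _).trans hceil
    rw [div_le_iff₀ hδ0] at this
    linarith
  have hdim : (Fam.vcDim : ℝ) ≤ d := by
    refine Nat.cast_le.2 (Finset.sup_le fun S hS => hVC S fun T hT => ?_)
    obtain ⟨R, hR, hRT⟩ := mem_shatterer.1 hS hT
    exact ⟨R, hR, by rwa [inter_comm]⟩
  set T := sampleExpectation μ s (fun u => #(Fam.image (· ∩ univ.image u)))
  set M := sampleExpectation μ s (fun u => ∑ x, μ x * traceSplit Fam (univ.image u) x)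
  have hn : (0 : ℝ) ≤ #Fam := Nat.cast_nonneg _
  have hM : 8 * M ≤ δ * #Fam := by
    have hsM := succ_mul_sampleExpectation_traceSplit_le hμ0 hμ1 Fam s
    refine le_of_mul_le_mul_left ?_ (by positivity : (0 : ℝ) < s + 1)
    calc (s + 1 : ℝ) * (8 * M) ≤ 8 * (d * #Fam) := by nlinarith
      _ ≤ (s + 1) * (δ * #Fam) := by nlinarith
  have hT := mul_card_le_sampleExpectation hμ0 hμ1 hsep s
  have h34 : δ * (3 * #Fam) ≤ δ * (4 * T) := by linarith
  show (#Fam : ℝ) ≤ 2 * T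
  linarith [le_of_mul_le_mul_left h34 hδ0]

theorem weighted_packing_lemma {α : Type*} [Fintype α] [DecidableEq α]
    (μ : α → ℝ) (hμ0 : ∀ x, 0 ≤ μ x) (hμ1 : ∑ x, μ x = 1)
    (Fam : Finset (Finset α)) (d : ℕ) (hd : 1 ≤ d)
    (hVC : ∀ S : Finset α, (∀ T ⊆ S, ∃ R ∈ Fam, R ∩ S = T) → S.card ≤ d)
    (δ : ℝ) (hδ0 : 0 < δ) (hδ1 : δ < 1)
    (hsep : ∀ S ∈ Fam, ∀ R ∈ Fam, S ≠ R → δ ≤ ∑ x ∈ (S \ R) ∪ (R \ S), μ x) :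
    (Fam.card : ℝ) ≤
      2 * ∑ u : Fin (Nat.ceil (8 * (d : ℝ) / δ) - 1) → α,
        (∏ i, μ (u i)) *
          ((Fam.image (fun S => S ∩ (Finset.univ.image u))).card : ℝ) :=
  weighted_packing_lemma_general μ hμ0 hμ1 Fam d hVC δ hδ0 hsep
end

section
/- Haussler's unit-distance graph lemma: Let (X, 𝒫) be a finite set system with VC-dimension at most d, and let G be the graph on vertex set 𝒫 with an edge between Sᵢ ≠ Sⱼ whenever |Δ(Sᵢ,Sⱼ)| = 1. Then the number of edges of G is at most d·|𝒫|. -/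
open Finset

private def hE {α : Type*} [DecidableEq α] (F : Finset (Finset α)) :
    Finset (Finset α × Finset α) :=
  (F ×ˢ F).filter (fun p => p.1 ≠ p.2 ∧ ((p.1 \ p.2) ∪ (p.2 \ p.1)).card = 1)

private lemma delta_one_insert {α : Type*} [DecidableEq α] {S T : Finset α} {x : α}
    (h : ((S \ T) ∪ (T \ S)).card = 1) (hxS : x ∈ S) (hxT : x ∉ T) :
    S = insert x T := by
  obtain ⟨a, ha⟩ := Finset.card_eq_one.mp h
  have hax : a = x := by
    have hx : x ∈ (S \ T) ∪ (T \ S) := by simp [hxS, hxT]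
    rw [ha] at hx; exact (mem_singleton.mp hx).symm
  subst hax
  ext b
  have hb : b ∈ (S \ T) ∪ (T \ S) ↔ b = a := by rw [ha]; simp
  simp only [mem_union, mem_sdiff, mem_insert] at hb ⊢
  by_cases hba : b = a
  · subst hba; simp [hxS]
  · constructor
    · intro hbS
      by_cases hbT : b ∈ T
      · exact Or.inr hbT
      · exact absurd (hb.mp (Or.inl ⟨hbS, hbT⟩)) hba
    · rintro (rfl | hbT)
      · exact hxS
      · by_contra hbS
        exact hba (hb.mp (Or.inr ⟨hbT, hbS⟩))

private lemma delta_erase {α : Type*} [DecidableEq α] {S T : Finset α} {x : α}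
    (hx : x ∈ S ↔ x ∈ T) :
    (S.erase x \ T.erase x) ∪ (T.erase x \ S.erase x) = (S \ T) ∪ (T \ S) := by
  ext b
  simp only [mem_union, mem_sdiff, mem_erase]
  by_cases hbx : b = x
  · subst hbx; tauto
  · tauto

private lemma haussler_aux {α : Type*} [DecidableEq α] (X : Finset α) :
    ∀ (Fam : Finset (Finset α)) (d : ℕ),
      (∀ S ∈ Fam, S ⊆ X) →
      (∀ S : Finset α, (∀ T ⊆ S, ∃ R ∈ Fam, R ∩ S = T) → S.card ≤ d) →
      (hE Fam).card ≤ 2 * d * Fam.card := by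
  induction X using Finset.induction_on with
  | empty =>
    intro Fam d hsub _
    have hEe : hE Fam = ∅ := by
      rw [eq_empty_iff_forall_notMem]
      intro p hp
      simp only [hE, mem_filter, mem_product] at hp
      obtain ⟨⟨h1, h2⟩, hne, _⟩ := hp
      apply hne
      rw [subset_empty.mp (hsub _ h1), subset_empty.mp (hsub _ h2)]
    simp [hEe]
  | @insert x X' hx ih =>
    intro Fam d hsub hVC
    set F0 : Finset (Finset α) := Fam.filter (fun S => x ∉ S) with hF0def
    set F1 : Finset (Finset α) := Fam.filter (fun S => x ∈ S) with hF1def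
    set F1' : Finset (Finset α) := F1.image (fun S => S.erase x) with hF1'def
    set F' : Finset (Finset α) := F0 ∪ F1' with hF'def
    set F'' : Finset (Finset α) := F0 ∩ F1' with hF''def
    have hmemF1' : ∀ S : Finset α, S ∈ F1' ↔ x ∉ S ∧ insert x S ∈ Fam := by
      intro S
      simp only [hF1'def, hF1def, mem_image, mem_filter]
      constructor
      · rintro ⟨R, ⟨hR, hxR⟩, rfl⟩
        refine ⟨notMem_erase _ _, ?_⟩
        rwa [insert_erase hxR]
      · rintro ⟨hxS, hS⟩
        exact ⟨insert x S, ⟨hS, mem_insert_self _ _⟩, by rw [erase_insert hxS]⟩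
    have hF''prop : ∀ R ∈ F'', x ∉ R ∧ R ∈ Fam ∧ insert x R ∈ Fam := by
      intro R hR
      obtain ⟨h0, h1⟩ := mem_inter.mp hR
      obtain ⟨hRF, hxR⟩ := mem_filter.mp h0
      exact ⟨hxR, hRF, ((hmemF1' R).mp h1).2⟩
    -- subsets of X'
    have hsub' : ∀ S ∈ F', S ⊆ X' := by
      intro S hS
      rcases mem_union.mp hS with h | h
      · obtain ⟨hSF, hxS⟩ := mem_filter.mp h
        intro a ha
        rcases mem_insert.mp (hsub S hSF ha) with rfl | h'
        · exact absurd ha hxS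
        · exact h'
      · obtain ⟨hxS, hS'⟩ := (hmemF1' S).mp h
        intro a ha
        rcases mem_insert.mp (hsub _ hS' (mem_insert_of_mem ha)) with rfl | h'
        · exact absurd ha hxS
        · exact h'
    have hsub'' : ∀ S ∈ F'', S ⊆ X' := fun S hS =>
      hsub' S (mem_union.mpr (Or.inl (mem_inter.mp hS).1))
    -- VC condition for F'
    have hVC' : ∀ S : Finset α, (∀ T ⊆ S, ∃ R ∈ F', R ∩ S = T) → S.card ≤ d := by
      intro S hS
      obtain ⟨R, hR, hRS⟩ := hS S (Subset.refl S)
      have hxR : x ∉ R := by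
        rcases mem_union.mp hR with h | h
        · exact (mem_filter.mp h).2
        · exact ((hmemF1' R).mp h).1
      have hxS : x ∉ S := fun h => hxR (inter_eq_right.mp hRS h)
      apply hVC S
      intro T hT
      obtain ⟨R, hR, hRT⟩ := hS T hT
      rcases mem_union.mp hR with h | h
      · exact ⟨R, (mem_filter.mp h).1, hRT⟩
      · obtain ⟨hxR, hR'⟩ := (hmemF1' R).mp h
        refine ⟨insert x R, hR', ?_⟩
        rw [insert_inter_of_notMem hxS, hRT]
    -- VC condition for F''
    have hVC'' : ∀ S : Finset α, (∀ T ⊆ S, ∃ R ∈ F'', R ∩ S = T) → S.card ≤ d - 1 := by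
      intro S hS
      obtain ⟨R, hR, hRS⟩ := hS S (Subset.refl S)
      have hxS : x ∉ S := fun h => (hF''prop R hR).1 (inter_eq_right.mp hRS h)
      have key : (insert x S).card ≤ d := by
        apply hVC
        intro T hT
        by_cases hxT : x ∈ T
        · have hTe : T.erase x ⊆ S := by
            intro a ha
            obtain ⟨hax, haT⟩ := mem_erase.mp ha
            rcases mem_insert.mp (hT haT) with rfl | h'
            · exact absurd rfl hax
            · exact h'
          obtain ⟨R, hR, hRT⟩ := hS (T.erase x) hTe
          obtain ⟨hxR, hRF, hRiF⟩ := hF''prop R hR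
          refine ⟨insert x R, hRiF, ?_⟩
          have : insert x R ∩ insert x S = insert x (R ∩ S) := by
            ext a
            simp only [mem_inter, mem_insert]
            tauto
          rw [this, hRT, insert_erase hxT]
        · have hTS : T ⊆ S := by
            intro a ha
            rcases mem_insert.mp (hT ha) with rfl | h'
            · exact absurd ha hxT
            · exact h'
          obtain ⟨R, hR, hRT⟩ := hS T hTS
          obtain ⟨hxR, hRF, _⟩ := hF''prop R hR
          refine ⟨R, hRF, ?_⟩
          rw [inter_insert_of_notMem hxR, hRT]
      have hle : S.card + 1 ≤ d := by rwa [card_insert_of_notMem hxS] at key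
      omega
    -- cardinalities
    have hcard1 : F1'.card = F1.card := by
      apply card_image_of_injOn
      intro S hS T hT h
      have hxS : x ∈ S := (mem_filter.mp hS).2
      have hxT : x ∈ T := (mem_filter.mp hT).2
      have h' : S.erase x = T.erase x := h
      rw [← insert_erase hxS, ← insert_erase hxT, h']
    have hcardFam : F'.card + F''.card = Fam.card := by
      rw [hF'def, hF''def, card_union_add_card_inter, hcard1, hF0def, hF1def]
      rw [add_comm]
      exact card_filter_add_card_filter_not (p := fun S => x ∈ S)
    -- the four buckets
    set P11 := (hE Fam).filter (fun p => x ∈ p.1 ∧ x ∈ p.2) with hP11def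
    set P10 := (hE Fam).filter (fun p => x ∈ p.1 ∧ x ∉ p.2) with hP10def
    set P01 := (hE Fam).filter (fun p => x ∉ p.1 ∧ x ∈ p.2) with hP01def
    set P00 := (hE Fam).filter (fun p => x ∉ p.1 ∧ x ∉ p.2) with hP00def
    have hPmem : ∀ p : Finset α × Finset α, p ∈ hE Fam ↔
        (p.1 ∈ Fam ∧ p.2 ∈ Fam) ∧ p.1 ≠ p.2 ∧ ((p.1 \ p.2) ∪ (p.2 \ p.1)).card = 1 := by
      intro p
      simp only [hE, mem_filter, mem_product]
    have hsplit : (hE Fam).card = P11.card + P10.card + P01.card + P00.card := by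
      have a1 := card_filter_add_card_filter_not (s := hE Fam)
        (p := fun p => x ∈ p.1)
      have a2 := card_filter_add_card_filter_not
        (s := (hE Fam).filter (fun p => x ∈ p.1)) (p := fun p => x ∈ p.2)
      have a3 := card_filter_add_card_filter_not
        (s := (hE Fam).filter (fun p => ¬ x ∈ p.1)) (p := fun p => x ∈ p.2)
      rw [filter_filter, filter_filter] at a2 a3
      rw [hP11def, hP10def, hP01def, hP00def]
      omega
    -- buckets P10, P01
    have hP10 : P10.card ≤ F''.card := by
      apply card_le_card_of_injOn (fun p => p.2)
      · intro p hp
        obtain ⟨hpE, hx1, hx2⟩ := mem_filter.mp hp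
        obtain ⟨⟨h1, h2⟩, hne, hcard⟩ := (hPmem p).mp hpE
        have h12 : p.1 = insert x p.2 := delta_one_insert hcard hx1 hx2
        exact mem_inter.mpr ⟨mem_filter.mpr ⟨h2, hx2⟩,
          (hmemF1' p.2).mpr ⟨hx2, h12 ▸ h1⟩⟩
      · intro p hp q hq hpq
        simp only [mem_coe] at hp hq
        obtain ⟨hpE, hx1p, hx2p⟩ := mem_filter.mp hp
        obtain ⟨hqE, hx1q, hx2q⟩ := mem_filter.mp hq
        obtain ⟨_, _, hcardp⟩ := (hPmem p).mp hpE
        obtain ⟨_, _, hcardq⟩ := (hPmem q).mp hqE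
        have h12p : p.1 = insert x p.2 := delta_one_insert hcardp hx1p hx2p
        have h12q : q.1 = insert x q.2 := delta_one_insert hcardq hx1q hx2q
        have hpq' : p.2 = q.2 := hpq
        exact Prod.ext (by rw [h12p, h12q, hpq']) hpq'
    have hP01 : P01.card ≤ F''.card := by
      apply card_le_card_of_injOn (fun p => p.1)
      · intro p hp
        obtain ⟨hpE, hx1, hx2⟩ := mem_filter.mp hp
        obtain ⟨⟨h1, h2⟩, hne, hcard⟩ := (hPmem p).mp hpE
        have hcard' : ((p.2 \ p.1) ∪ (p.1 \ p.2)).card = 1 := by rwa [union_comm]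
        have h12 : p.2 = insert x p.1 := delta_one_insert hcard' hx2 hx1
        exact mem_inter.mpr ⟨mem_filter.mpr ⟨h1, hx1⟩,
          (hmemF1' p.1).mpr ⟨hx1, h12 ▸ h2⟩⟩
      · intro p hp q hq hpq
        simp only [mem_coe] at hp hq
        obtain ⟨hpE, hx1p, hx2p⟩ := mem_filter.mp hp
        obtain ⟨hqE, hx1q, hx2q⟩ := mem_filter.mp hq
        obtain ⟨_, _, hcardp⟩ := (hPmem p).mp hpE
        obtain ⟨_, _, hcardq⟩ := (hPmem q).mp hqE
        have hcardp' : ((p.2 \ p.1) ∪ (p.1 \ p.2)).card = 1 := by rwa [union_comm]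
        have hcardq' : ((q.2 \ q.1) ∪ (q.1 \ q.2)).card = 1 := by rwa [union_comm]
        have h12p : p.2 = insert x p.1 := delta_one_insert hcardp' hx2p hx1p
        have h12q : q.2 = insert x q.1 := delta_one_insert hcardq' hx2q hx1q
        have hpq' : p.1 = q.1 := hpq
        exact Prod.ext hpq' (by rw [h12p, h12q, hpq'])
    -- buckets P00, P11
    have hP00sub : P00 ⊆ hE F' := by
      intro p hp
      obtain ⟨hpE, hx1, hx2⟩ := mem_filter.mp hp
      obtain ⟨⟨h1, h2⟩, hrest⟩ := (hPmem p).mp hpE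
      simp only [hE, mem_filter, mem_product]
      exact ⟨⟨mem_union.mpr (Or.inl (mem_filter.mpr ⟨h1, hx1⟩)),
        mem_union.mpr (Or.inl (mem_filter.mpr ⟨h2, hx2⟩))⟩, hrest⟩
    set g : Finset α × Finset α → Finset α × Finset α :=
      fun p => (p.1.erase x, p.2.erase x) with hgdef
    set B := P11.image g with hBdef
    have hBcard : B.card = P11.card := by
      apply card_image_of_injOn
      intro p hp q hq hpq
      obtain ⟨hpE, hx1p, hx2p⟩ := mem_filter.mp hp
      obtain ⟨hqE, hx1q, hx2q⟩ := mem_filter.mp hq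
      have e1 : p.1.erase x = q.1.erase x := congrArg Prod.fst hpq
      have e2 : p.2.erase x = q.2.erase x := congrArg Prod.snd hpq
      refine Prod.ext ?_ ?_
      · rw [← insert_erase hx1p, ← insert_erase hx1q, e1]
      · rw [← insert_erase hx2p, ← insert_erase hx2q, e2]
    have hBsub : B ⊆ hE F' := by
      intro q hq
      obtain ⟨p, hp, rfl⟩ := mem_image.mp hq
      obtain ⟨hpE, hx1, hx2⟩ := mem_filter.mp hp
      obtain ⟨⟨h1, h2⟩, hne, hcard⟩ := (hPmem p).mp hpE
      simp only [hE, mem_filter, mem_product, hgdef]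
      refine ⟨⟨mem_union.mpr (Or.inr ((hmemF1' _).mpr
          ⟨notMem_erase _ _, by rw [insert_erase hx1]; exact h1⟩)),
        mem_union.mpr (Or.inr ((hmemF1' _).mpr
          ⟨notMem_erase _ _, by rw [insert_erase hx2]; exact h2⟩))⟩, ?_, ?_⟩
      · intro h
        apply hne
        rw [← insert_erase hx1, ← insert_erase hx2, h]
      · rw [delta_erase (by simp [hx1, hx2])]
        exact hcard
    have hABsub : P00 ∩ B ⊆ hE F'' := by
      intro q hq
      obtain ⟨hq0, hqB⟩ := mem_inter.mp hq
      obtain ⟨hqE, hx1, hx2⟩ := mem_filter.mp hq0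
      obtain ⟨⟨h1, h2⟩, hne, hcard⟩ := (hPmem q).mp hqE
      obtain ⟨p, hp, hgp⟩ := mem_image.mp hqB
      obtain ⟨hpE, hx1p, hx2p⟩ := mem_filter.mp hp
      obtain ⟨⟨hp1, hp2⟩, _, _⟩ := (hPmem p).mp hpE
      have e1 : q.1 = p.1.erase x := (congrArg Prod.fst hgp).symm
      have e2 : q.2 = p.2.erase x := (congrArg Prod.snd hgp).symm
      have hq1F1' : q.1 ∈ F1' := by
        rw [e1]
        exact mem_image.mpr ⟨p.1, mem_filter.mpr ⟨hp1, hx1p⟩, rfl⟩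
      have hq2F1' : q.2 ∈ F1' := by
        rw [e2]
        exact mem_image.mpr ⟨p.2, mem_filter.mpr ⟨hp2, hx2p⟩, rfl⟩
      simp only [hE, mem_filter, mem_product]
      exact ⟨⟨mem_inter.mpr ⟨mem_filter.mpr ⟨h1, hx1⟩, hq1F1'⟩,
        mem_inter.mpr ⟨mem_filter.mpr ⟨h2, hx2⟩, hq2F1'⟩⟩, hne, hcard⟩
    have hP00P11 : P00.card + P11.card ≤ (hE F').card + (hE F'').card := by
      have h1 : (P00 ∪ B).card + (P00 ∩ B).card = P00.card + B.card :=
        card_union_add_card_inter _ _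
      have h2 : (P00 ∪ B).card ≤ (hE F').card :=
        card_le_card (union_subset hP00sub hBsub)
      have h3 : (P00 ∩ B).card ≤ (hE F'').card := card_le_card hABsub
      omega
    -- induction hypotheses
    have ihF' := ih F' d hsub' hVC'
    have ihF'' := ih F'' (d - 1) hsub'' hVC''
    -- d ≥ 1 if F'' nonempty
    have hkey : 2 * F''.card + 2 * (d - 1) * F''.card ≤ 2 * d * F''.card := by
      rcases F''.eq_empty_or_nonempty with h | ⟨S, hS⟩
      · simp [h]
      · obtain ⟨hxS, hSF, hSiF⟩ := hF''prop S hS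
        have hd : 1 ≤ d := by
          have h1 := hVC {x} ?_
          · simpa using h1
          · intro T hT
            rcases subset_singleton_iff.mp hT with rfl | rfl
            · exact ⟨S, hSF, by rw [inter_singleton_of_notMem hxS]⟩
            · exact ⟨insert x S, hSiF,
                by rw [inter_singleton_of_mem (mem_insert_self _ _)]⟩
        obtain ⟨e, rfl⟩ : ∃ e, d = e + 1 := ⟨d - 1, (Nat.sub_add_cancel hd).symm⟩
        have heq : 2 * F''.card + 2 * (e + 1 - 1) * F''.card
            = 2 * (e + 1) * F''.card := by
          rw [Nat.add_sub_cancel]; ring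
        exact le_of_eq heq
    calc (hE Fam).card
        = P11.card + P10.card + P01.card + P00.card := hsplit
      _ ≤ ((hE F').card + (hE F'').card) + F''.card + F''.card := by omega
      _ ≤ (2 * d * F'.card + 2 * (d - 1) * F''.card) + F''.card + F''.card := by
          exact add_le_add (add_le_add (add_le_add ihF' ihF'') le_rfl) le_rfl
      _ = 2 * d * F'.card + (2 * F''.card + 2 * (d - 1) * F''.card) := by ring
      _ ≤ 2 * d * F'.card + 2 * d * F''.card := add_le_add le_rfl hkey
      _ = 2 * d * (F'.card + F''.card) := by ring
      _ = 2 * d * Fam.card := by rw [hcardFam]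

theorem haussler_unit_distance {α : Type*} [DecidableEq α]
    (Fam : Finset (Finset α)) (d : ℕ)
    (hVC : ∀ S : Finset α, (∀ T ⊆ S, ∃ R ∈ Fam, R ∩ S = T) → S.card ≤ d) :
    ((Fam ×ˢ Fam).filter
        (fun p => p.1 ≠ p.2 ∧ ((p.1 \ p.2) ∪ (p.2 \ p.1)).card = 1)).card
      ≤ 2 * d * Fam.card := by
  exact haussler_aux (Fam.sup id) Fam d (fun S hS => le_sup (f := id) hS) hVC
end

section
/- Let 𝒫_Q be a finite collection of b sets, all containing a common intersection pattern, and let u be a random element with Pr[u ∈ Δ(S,S')] ≥ δ for every pair of distinct S, S' ∈ 𝒫_Q. If u partitions 𝒫_Q into groups of sizes b₁ (sets containing u) and b₂ = b − b₁, then E[min{b₁,b₂}] ≥ E[b₁b₂/b] ≥ (δ/2)(b − 1). -/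
open Finset

theorem expected_split_weight {α : Type*} [Fintype α] [DecidableEq α]
    (μ : α → ℝ) (hμ0 : ∀ x, 0 ≤ μ x) (hμ1 : ∑ x, μ x = 1)
    (Fam : Finset (Finset α)) (hb : 0 < Fam.card) (δ : ℝ) (hδ : 0 < δ)
    (hsep : ∀ S ∈ Fam, ∀ S' ∈ Fam, S ≠ S' →
      δ ≤ ∑ x ∈ (S \ S') ∪ (S' \ S), μ x) :
    (δ / 2) * ((Fam.card : ℝ) - 1)
      ≤ (∑ u : α, μ u *
          (((Fam.filter (fun S => u ∈ S)).card : ℝ) *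
            ((Fam.card : ℝ) - ((Fam.filter (fun S => u ∈ S)).card : ℝ)) / (Fam.card : ℝ)))
    ∧ (∑ u : α, μ u *
          (((Fam.filter (fun S => u ∈ S)).card : ℝ) *
            ((Fam.card : ℝ) - ((Fam.filter (fun S => u ∈ S)).card : ℝ)) / (Fam.card : ℝ)))
      ≤ ∑ u : α, μ u *
          min (((Fam.filter (fun S => u ∈ S)).card : ℝ))
            ((Fam.card : ℝ) - ((Fam.filter (fun S => u ∈ S)).card : ℝ)) := by
  have hbR : (0:ℝ) < (Fam.card : ℝ) := by exact_mod_cast hb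
  set b : ℝ := (Fam.card : ℝ) with hbdef
  have hcardle : ∀ u : α, ((Fam.filter (fun S => u ∈ S)).card : ℝ) ≤ b := by
    intro u
    simpa [hbdef] using
      (Nat.cast_le (α := ℝ)).mpr (Finset.card_filter_le Fam (fun S => u ∈ S))
  have hcardnn : ∀ u : α, (0:ℝ) ≤ ((Fam.filter (fun S => u ∈ S)).card : ℝ) := by
    intro u; positivity
  constructor
  · -- first inequality
    have key : ∀ u : α, (((Fam.filter (fun S => u ∈ S)).card : ℝ))
        * (b - ((Fam.filter (fun S => u ∈ S)).card : ℝ))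
        = ∑ S ∈ Fam, ∑ S' ∈ Fam, if u ∈ S ∧ u ∉ S' then (1:ℝ) else 0 := by
      intro u
      have h2 : b - ((Fam.filter (fun S => u ∈ S)).card : ℝ)
          = ((Fam.filter (fun S => u ∉ S)).card : ℝ) := by
        have h := Finset.card_filter_add_card_filter_not
          (s := Fam) (p := fun S => u ∈ S)
        rw [hbdef, ← h]
        push_cast
        ring
      rw [h2]
      rw [Finset.sum_comm]
      have : ∀ S' ∈ Fam, (∑ S ∈ Fam, if u ∈ S ∧ u ∉ S' then (1:ℝ) else 0)
          = (if u ∉ S' then (1:ℝ) else 0) * ((Fam.filter (fun S => u ∈ S)).card : ℝ) := by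
        intro S' _
        by_cases h : u ∈ S' <;> simp [h, Finset.sum_boole]
      rw [Finset.sum_congr rfl this, ← Finset.sum_mul, Finset.sum_boole]
      push_cast
      ring
    have step : ∀ S S' : Finset α, (∑ x ∈ S \ S', μ x)
        = ∑ u : α, μ u * (if u ∈ S ∧ u ∉ S' then (1:ℝ) else 0) := by
      intro S S'
      have hset : S \ S' = Finset.univ.filter (fun u => u ∈ S ∧ u ∉ S') := by
        ext x; simp [Finset.mem_sdiff]
      rw [hset, Finset.sum_filter]
      exact Finset.sum_congr rfl (fun u _ => by by_cases h : u ∈ S ∧ u ∉ S' <;> simp [h])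
    have sum_eq : (∑ u : α, μ u *
          (((Fam.filter (fun S => u ∈ S)).card : ℝ) *
            (b - ((Fam.filter (fun S => u ∈ S)).card : ℝ))))
        = ∑ S ∈ Fam, ∑ S' ∈ Fam, ∑ x ∈ S \ S', μ x := by
      calc (∑ u : α, μ u *
          (((Fam.filter (fun S => u ∈ S)).card : ℝ) *
            (b - ((Fam.filter (fun S => u ∈ S)).card : ℝ))))
          = ∑ u : α, ∑ S ∈ Fam, ∑ S' ∈ Fam,
              μ u * (if u ∈ S ∧ u ∉ S' then (1:ℝ) else 0) := by
            refine Finset.sum_congr rfl (fun u _ => ?_)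
            rw [key u, Finset.mul_sum]
            exact Finset.sum_congr rfl (fun S _ => Finset.mul_sum _ _ _)
        _ = ∑ S ∈ Fam, ∑ u : α, ∑ S' ∈ Fam,
              μ u * (if u ∈ S ∧ u ∉ S' then (1:ℝ) else 0) := Finset.sum_comm
        _ = ∑ S ∈ Fam, ∑ S' ∈ Fam, ∑ u : α,
              μ u * (if u ∈ S ∧ u ∉ S' then (1:ℝ) else 0) :=
            Finset.sum_congr rfl (fun S _ => Finset.sum_comm)
        _ = ∑ S ∈ Fam, ∑ S' ∈ Fam, ∑ x ∈ S \ S', μ x :=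
            Finset.sum_congr rfl (fun S _ =>
              Finset.sum_congr rfl (fun S' _ => (step S S').symm))
    set T : ℝ := ∑ S ∈ Fam, ∑ S' ∈ Fam, ∑ x ∈ S \ S', μ x with hT
    have hTsym : T = ∑ S ∈ Fam, ∑ S' ∈ Fam, ∑ x ∈ S' \ S, μ x := by
      rw [hT, Finset.sum_comm]
    have h2T : δ * (b * (b - 1)) ≤ 2 * T := by
      have h2Teq : 2 * T = ∑ S ∈ Fam, ∑ S' ∈ Fam,
          ((∑ x ∈ S \ S', μ x) + (∑ x ∈ S' \ S, μ x)) := by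
        rw [two_mul]
        nth_rewrite 2 [hTsym]
        rw [hT, ← Finset.sum_add_distrib]
        exact Finset.sum_congr rfl (fun S _ => by rw [← Finset.sum_add_distrib])
      rw [h2Teq]
      have hinner : ∀ S ∈ Fam, δ * (b - 1) ≤ ∑ S' ∈ Fam,
          ((∑ x ∈ S \ S', μ x) + (∑ x ∈ S' \ S, μ x)) := by
        intro S hS
        have hnn : ∀ S' ∈ Fam, S' ∉ Fam.erase S →
            (0:ℝ) ≤ (∑ x ∈ S \ S', μ x) + (∑ x ∈ S' \ S, μ x) := by
          intro S' _ _
          have := Finset.sum_nonneg (fun x (_ : x ∈ S \ S') => hμ0 x)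
          have := Finset.sum_nonneg (fun x (_ : x ∈ S' \ S) => hμ0 x)
          linarith
        have hsub : ∑ S' ∈ Fam.erase S, ((∑ x ∈ S \ S', μ x) + (∑ x ∈ S' \ S, μ x))
            ≤ ∑ S' ∈ Fam, ((∑ x ∈ S \ S', μ x) + (∑ x ∈ S' \ S, μ x)) :=
          Finset.sum_le_sum_of_subset_of_nonneg (Finset.erase_subset _ _) hnn
        have hlow : δ * (b - 1) ≤ ∑ S' ∈ Fam.erase S,
            ((∑ x ∈ S \ S', μ x) + (∑ x ∈ S' \ S, μ x)) := by
          have hconst : δ * (b - 1) = ∑ _S' ∈ Fam.erase S, δ := by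
            rw [Finset.sum_const, nsmul_eq_mul, Finset.card_erase_of_mem hS,
              Nat.cast_sub hb]
            push_cast
            ring
          rw [hconst]
          refine Finset.sum_le_sum (fun S' hS' => ?_)
          have hne : S ≠ S' := fun h => (Finset.mem_erase.mp hS').1 h.symm
          have h := hsep S hS S' (Finset.mem_erase.mp hS').2 hne
          rwa [Finset.sum_union disjoint_sdiff_sdiff] at h
        linarith
      calc δ * (b * (b - 1)) = ∑ _S ∈ Fam, δ * (b - 1) := by
            rw [Finset.sum_const, nsmul_eq_mul]; ring
        _ ≤ _ := Finset.sum_le_sum hinner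
    have goal_eq : (∑ u : α, μ u *
          (((Fam.filter (fun S => u ∈ S)).card : ℝ) *
            (b - ((Fam.filter (fun S => u ∈ S)).card : ℝ)) / b)) = T / b := by
      rw [← sum_eq, Finset.sum_div]
      exact Finset.sum_congr rfl (fun u _ => by ring)
    rw [goal_eq, le_div_iff₀ hbR]
    nlinarith [h2T]
  · -- second inequality: pointwise
    refine Finset.sum_le_sum (fun u _ => ?_)
    refine mul_le_mul_of_nonneg_left ?_ (hμ0 u)
    set c : ℝ := ((Fam.filter (fun S => u ∈ S)).card : ℝ)
    have hc0 : 0 ≤ c := hcardnn u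
    have hcb : c ≤ b := hcardle u
    rcases le_total c (b - c) with h | h
    · rw [min_eq_left h, div_le_iff₀ hbR]
      nlinarith
    · rw [min_eq_right h, div_le_iff₀ hbR]
      nlinarith
end
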